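/- arXiv:2104.03593 — 8 statements merged into one kernel-verified Lean document; each statement's English description precedes it below -/
import Mathlib

section
/- Let n ≥ 1 and α ∈ Sₙ, and let y ∈ Sₙ be a solution of α ∘ y ∘ α⁻¹ = y². Then y and y² have the same cycle type, every cycle of y has odd length (y has no cycles of even length, i.e. every element of the cycle type of y is odd), and for every point c the set of points of the cycle of y through c equals the set of points of the cycle of y² through c. -/
/-!
`y` is conjugate to `y²`, so both have the same cycle type and hence the same order `N`.
Since squaring halves the order of an element of even order, `N` is odd; so every cycle
length (a divisor of `N`) is odd, and `2` is invertible mod `N`, which makes `y` a power of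
`y²` and gives the two permutations the same orbits.
-/

lemma odd_orderOf_of_orderOf_sq_eq {G : Type*} [Monoid G] {g : G} (hg : IsOfFinOrder g)
    (h : orderOf (g ^ 2) = orderOf g) : Odd (orderOf g) := by
  rw [← Nat.not_even_iff_odd]
  intro heven
  rw [orderOf_pow_of_dvd two_ne_zero heven.two_dvd] at h
  have := hg.orderOf_pos
  omega

lemma mem_powers_sq_of_odd_orderOf {G : Type*} [Group G] [Finite G] {g : G}
    (h : Odd (orderOf g)) : g ∈ Submonoid.powers (g ^ 2) := by
  rw [mem_powers_iff_mem_zpowers, mem_zpowers_pow_iff]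
  exact Nat.coprime_two_left.mpr h

namespace Equiv.Perm

variable {α : Type*}

lemma orderOf_eq_of_cycleType_eq [Fintype α] [DecidableEq α] {σ τ : Perm α}
    (h : σ.cycleType = τ.cycleType) : orderOf σ = orderOf τ := by
  rw [← lcm_cycleType, h, lcm_cycleType]

lemma odd_of_mem_cycleType_of_odd_orderOf [Fintype α] [DecidableEq α] {σ : Perm α} {r : ℕ}
    (hr : r ∈ σ.cycleType) (h : Odd (orderOf σ)) : Odd r :=
  h.of_dvd_nat (dvd_of_mem_cycleType hr)

lemma setOf_pow_apply_subset_of_mem_powers {σ τ : Perm α} (h : σ ∈ Submonoid.powers τ)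
    (c : α) : {x | ∃ i : ℕ, (σ ^ i) c = x} ⊆ {x | ∃ i : ℕ, (τ ^ i) c = x} := by
  obtain ⟨k, rfl⟩ := h
  rintro _ ⟨i, rfl⟩
  exact ⟨k * i, by rw [pow_mul]⟩

end Equiv.Perm

theorem stmt_6_general (n : ℕ) (α y : Equiv.Perm (Fin n))
    (hy : α * y * α⁻¹ = y ^ 2) :
    y.cycleType = (y ^ 2).cycleType ∧
    (∀ r ∈ y.cycleType, Odd r) ∧
    ∀ c : Fin n,
      {x : Fin n | ∃ i : ℕ, (y ^ i) c = x} =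
        {x : Fin n | ∃ i : ℕ, ((y ^ 2) ^ i) c = x} := by
  have hct : y.cycleType = (y ^ 2).cycleType := by rw [← hy, Equiv.Perm.cycleType_conj]
  have hodd : Odd (orderOf y) := odd_orderOf_of_orderOf_sq_eq (isOfFinOrder_of_finite y)
    (Equiv.Perm.orderOf_eq_of_cycleType_eq hct).symm
  refine ⟨hct, fun r hr => Equiv.Perm.odd_of_mem_cycleType_of_odd_orderOf hr hodd, fun c => ?_⟩
  exact (Equiv.Perm.setOf_pow_apply_subset_of_mem_powers
    (mem_powers_sq_of_odd_orderOf hodd) c).antisymm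
    (Equiv.Perm.setOf_pow_apply_subset_of_mem_powers ⟨2, rfl⟩ c)

/-- If `y` solves `α ∘ y ∘ α⁻¹ = y²`, then `y` and `y²` have the same cycle type,
every cycle of `y` has odd length, and for every point `c` the point set of the
cycle of `y` through `c` equals the point set of the cycle of `y²` through `c`. -/
theorem stmt_6 (n : ℕ) (hn : 1 ≤ n) (α y : Equiv.Perm (Fin n))
    (hy : α * y * α⁻¹ = y ^ 2) :
    y.cycleType = (y ^ 2).cycleType ∧
    (∀ r ∈ y.cycleType, Odd r) ∧
    ∀ c : Fin n,
      {x : Fin n | ∃ i : ℕ, (y ^ i) c = x} =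
        {x : Fin n | ∃ i : ℕ, ((y ^ 2) ^ i) c = x} :=
  stmt_6_general n α y hy
end

section
/- Let n ≥ 1 and α ∈ Sₙ, let y ∈ Sₙ be a solution of α ∘ y ∘ α⁻¹ = y², and let c ∈ {1,…,n}, d ≥ 1, r ≥ 1, s ≥ 1 be such that y^r(c) = c, α^d(c) = y^s(c), and gcd(2^d − 1, r) = 1. Then there exists an integer u ≥ 1 such that α^d(y^u(c)) = y^u(c); that is, α^d has a fixed point lying on the cycle of y through c. -/
/-!
Conjugating by `α` squares `y`, so conjugating by `α ^ d` raises `y` to the power `2 ^ d`; hence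
`α ^ d (y ^ u c) = y ^ (2 ^ d * u) (α ^ d c) = y ^ (2 ^ d * u + s) c`. Along the cycle of `y`
through `c`, whose length divides `r`, the map `α ^ d` therefore acts as the affine map
`u ↦ 2 ^ d * u + s` on exponents modulo `r`, and this map has a fixed point because
`2 ^ d - 1` is invertible modulo `r`.
-/

open Equiv Function

theorem conj_pow_eq_pow_pow_of_conj_eq_pow {G : Type*} [Group G] {a y : G} {m : ℕ}
    (h : a * y * a⁻¹ = y ^ m) (k : ℕ) : a ^ k * y * (a ^ k)⁻¹ = y ^ (m ^ k) := by
  induction k with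
  | zero => simp
  | succ k ih =>
    calc a ^ (k + 1) * y * (a ^ (k + 1))⁻¹ = a * (a ^ k * y * (a ^ k)⁻¹) * a⁻¹ := by group
      _ = (a * y * a⁻¹) ^ m ^ k := by rw [ih, conj_pow]
      _ = y ^ m ^ (k + 1) := by rw [h, ← pow_mul, pow_succ']

theorem Equiv.Perm.pow_apply_pow_apply_of_conj_eq_pow {β : Type*} {a y : Perm β} {m : ℕ}
    (h : a * y * a⁻¹ = y ^ m) (k u : ℕ) (x : β) :
    (a ^ k) ((y ^ u) x) = (y ^ (m ^ k * u)) ((a ^ k) x) := by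
  have hconj : a ^ k * y ^ u * (a ^ k)⁻¹ = y ^ (m ^ k * u) := by
    rw [← conj_pow, conj_pow_eq_pow_pow_of_conj_eq_pow h, pow_mul]
  rw [← hconj]
  simp

theorem Function.IsPeriodicPt.iterate_eq_of_modEq {β : Type*} {f : β → β} {n a b : ℕ} {x : β}
    (h : IsPeriodicPt f n x) (hab : a ≡ b [MOD n]) : f^[a] x = f^[b] x := by
  rw [← h.iterate_mod_apply, hab, h.iterate_mod_apply]

theorem Nat.exists_pos_succ_mul_add_modEq_self {m r : ℕ} (s : ℕ) (hmr : m.Coprime r)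
    (hr : 0 < r) : ∃ u, 0 < u ∧ (m + 1) * u + s ≡ u [MOD r] := by
  obtain ⟨v, -, hv⟩ := Nat.exists_mul_mod_eq_of_coprime ((r - 1) * s) hmr hr.ne'
  refine ⟨v + r, by omega, ?_⟩
  have hv' : ((m * v : ℕ) : ZMod r) = ((r - 1) * s : ℕ) :=
    (ZMod.natCast_eq_natCast_iff' _ _ _).mpr hv
  rw [← ZMod.natCast_eq_natCast_iff]
  push_cast [Nat.cast_sub hr, ZMod.natCast_self] at hv' ⊢
  linear_combination hv'

theorem stmt_8_general (n : ℕ) (α y : Equiv.Perm (Fin n))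
    (hy : α * y * α⁻¹ = y ^ 2) (c : Fin n) (d r s : ℕ)
    (hr : 1 ≤ r)
    (hrc : (y ^ r) c = c) (hdc : (α ^ d) c = (y ^ s) c)
    (hgcd : Nat.gcd (2 ^ d - 1) r = 1) :
    ∃ u : ℕ, 1 ≤ u ∧ (α ^ d) ((y ^ u) c) = (y ^ u) c := by
  obtain ⟨u, hu, hfix⟩ := Nat.exists_pos_succ_mul_add_modEq_self s hgcd hr
  rw [Nat.sub_add_cancel Nat.one_le_two_pow] at hfix
  refine ⟨u, hu, ?_⟩
  rw [Perm.pow_apply_pow_apply_of_conj_eq_pow hy, hdc, ← Perm.mul_apply, ← pow_add]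
  exact IsPeriodicPt.iterate_eq_of_modEq (f := y) hrc hfix

/-- If `y` solves `α ∘ y ∘ α⁻¹ = y²`, `y^r(c) = c`, `α^d(c) = y^s(c)` and
`gcd(2^d - 1, r) = 1` (with `d, r, s ≥ 1`), then `α^d` has a fixed point lying on
the cycle of `y` through `c`: there is `u ≥ 1` with `α^d(y^u(c)) = y^u(c)`. -/
theorem stmt_8 (n : ℕ) (hn : 1 ≤ n) (α y : Equiv.Perm (Fin n))
    (hy : α * y * α⁻¹ = y ^ 2) (c : Fin n) (d r s : ℕ)
    (hd : 1 ≤ d) (hr : 1 ≤ r) (hs : 1 ≤ s)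
    (hrc : (y ^ r) c = c) (hdc : (α ^ d) c = (y ^ s) c)
    (hgcd : Nat.gcd (2 ^ d - 1) r = 1) :
    ∃ u : ℕ, 1 ≤ u ∧ (α ^ d) ((y ^ u) c) = (y ^ u) c :=
  stmt_8_general n α y hy c d r s hr hrc hdc hgcd
end

section
/- Let n ≥ 1 and α ∈ Sₙ, let y ∈ Sₙ be a solution of α ∘ y ∘ α⁻¹ = y², and let c ∈ {1,…,n} be such that α(c) = y^s(c) for some integer s ≥ 1 (i.e. α maps the cycle of y through c into itself). Then α has a fixed point: there exists an integer u ≥ 1 with α(y^u(c)) = y^u(c). -/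
/-!
Conjugation by `α` squares `y`, hence sends `y ^ u` to `y ^ (2 * u)`, so
`α (y ^ u c) = y ^ (2 * u) (α c) = y ^ u (y ^ (u + s) c)`. Choosing `u ≥ 1` with `u + s` a multiple
of the order of `y` makes the last point `y ^ u c`.
-/

theorem conj_pow_of_conj_eq_sq {G : Type*} [Group G] {α y : G} (hy : α * y * α⁻¹ = y ^ 2)
    (k : ℕ) : α * y ^ k * α⁻¹ = y ^ (2 * k) := by
  rw [← conj_pow, hy, ← pow_mul]

theorem exists_pos_add_eq_mul {N : ℕ} (hN : 0 < N) (s : ℕ) : ∃ u, 1 ≤ u ∧ u + s = N * (s + 1) := by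
  have : s + 1 ≤ N * (s + 1) := Nat.le_mul_of_pos_left _ hN
  exact ⟨N * (s + 1) - s, by omega, by omega⟩

theorem exists_smul_pow_fixed_of_conj_eq_sq {G X : Type*} [Group G] [MulAction G X] {α y : G}
    (hy : α * y * α⁻¹ = y ^ 2) (hfin : IsOfFinOrder y) {c : X} {s : ℕ}
    (hc : α • c = y ^ s • c) : ∃ u, 1 ≤ u ∧ α • y ^ u • c = y ^ u • c := by
  obtain ⟨u, hu, hus⟩ := exists_pos_add_eq_mul hfin.orderOf_pos s
  refine ⟨u, hu, ?_⟩
  have hcomm : α * y ^ u = y ^ (2 * u) * α :=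
    mul_inv_eq_iff_eq_mul.mp (conj_pow_of_conj_eq_sq hy u)
  calc α • y ^ u • c = y ^ (2 * u) • α • c := by rw [smul_smul, hcomm, mul_smul]
    _ = y ^ u • y ^ (u + s) • c := by
      rw [hc, smul_smul, smul_smul, ← pow_add, ← pow_add, two_mul, add_assoc]
    _ = y ^ u • c := by rw [hus, pow_mul, pow_orderOf_eq_one, one_pow, one_smul]

theorem stmt_9_general (n : ℕ) (α y : Equiv.Perm (Fin n))
    (hy : α * y * α⁻¹ = y ^ 2) (c : Fin n) (s : ℕ)
    (hc : α c = (y ^ s) c) :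
    ∃ u : ℕ, 1 ≤ u ∧ α ((y ^ u) c) = (y ^ u) c :=
  exists_smul_pow_fixed_of_conj_eq_sq hy (isOfFinOrder_of_finite y) hc

/-- If `y` solves `α ∘ y ∘ α⁻¹ = y²` and `α(c) = y^s(c)` for some `s ≥ 1`
(that is, `α` maps the cycle of `y` through `c` into itself), then `α` has a
fixed point on that cycle: there is `u ≥ 1` with `α(y^u(c)) = y^u(c)`. -/
theorem stmt_9 (n : ℕ) (hn : 1 ≤ n) (α y : Equiv.Perm (Fin n))
    (hy : α * y * α⁻¹ = y ^ 2) (c : Fin n) (s : ℕ) (hs : 1 ≤ s)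
    (hc : α c = (y ^ s) c) :
    ∃ u : ℕ, 1 ≤ u ∧ α ((y ^ u) c) = (y ^ u) c :=
  stmt_9_general n α y hy c s hc
end

section
/- Let α ∈ Sₙ have type ⟨g₁, g₂, …, gₙ⟩. Assume that for every choice of integers r = 2m+1 with m ≥ 1 (r odd, r ≥ 3) and d ≥ 1 such that d·r ∈ F_d(α), one has g_d = 0 and gcd(2^d − 1, r) = 1. Then the equation α ∘ y ∘ α⁻¹ = y² has only the trivial solution y = 1. -/
/-!
Conjugation by `α` sends `y` to `y²`, so it permutes the cycles of `y`; and `y = y^(2^N)` for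
`N` the order of `α`, so `y` has odd order. Take a nontrivial `y`-cycle `C`, of odd length
`r ≥ 3`, and let `k` be the least positive integer with `αᵏ C = C`. The union of
`C, αC, …, αᵏ⁻¹C` is `α`-invariant, has `k r` points and all its `α`-periods are multiples
of `k`, so `k r` lies in the `k`-range of `α`; the hypothesis gives `g_k = 0` and
`gcd(2ᵏ - 1, r) = 1`. On `C ≅ ℤ/r` the map `αᵏ` acts as `t ↦ 2ᵏ t + b`, which has a fixed
point because `2ᵏ - 1` is invertible mod `r`; that point has `α`-period exactly `k`,
contradicting `g_k = 0`.
-/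

open Equiv Equiv.Perm Function Finset
open scoped Pointwise

section Group

variable {G : Type*} [Group G] {α y : G}

theorem pow_mul_mul_inv_pow_eq_pow_two_pow (h : α * y * α⁻¹ = y ^ 2) (k : ℕ) :
    α ^ k * y * (α ^ k)⁻¹ = y ^ 2 ^ k := by
  induction k with
  | zero => simp
  | succ k ih =>
    calc α ^ (k + 1) * y * (α ^ (k + 1))⁻¹
        = α * (α ^ k * y * (α ^ k)⁻¹) * α⁻¹ := by group
      _ = (α * y * α⁻¹) ^ 2 ^ k := by rw [ih, conj_pow]
      _ = y ^ 2 ^ (k + 1) := by rw [h, ← pow_mul, pow_succ']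

theorem pow_two_pow_orderOf_eq_self (h : α * y * α⁻¹ = y ^ 2) : y ^ 2 ^ orderOf α = y := by
  simpa using (pow_mul_mul_inv_pow_eq_pow_two_pow h (orderOf α)).symm

theorem pow_two_pow_orderOf_sub_one_eq_one (h : α * y * α⁻¹ = y ^ 2) :
    y ^ (2 ^ orderOf α - 1) = 1 := by
  rw [← mul_eq_right (b := y)]
  conv_rhs => rw [← pow_two_pow_orderOf_eq_self h]
  rw [← pow_succ, Nat.sub_add_cancel Nat.one_le_two_pow]

end Group

namespace Equiv.Perm

section SameCycleClass

variable {ι : Type*} [Fintype ι] {σ : Perm ι}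

theorem mem_of_sameCycle {W : Finset ι} (hW : ∀ z ∈ W, σ z ∈ W) {z w : ι} (hz : z ∈ W)
    (hzw : σ.SameCycle z w) : w ∈ W := by
  obtain ⟨i, -, rfl⟩ := hzw.exists_pow_eq'
  clear hzw
  induction i with
  | zero => simpa using hz
  | succ i ih => rw [pow_succ', mul_apply]; exact hW _ ih

variable [DecidableEq ι]

variable (σ) in
def sameCycleClass (x : ι) : Finset ι := {w | σ.SameCycle x w}

@[simp]
theorem mem_sameCycleClass {x w : ι} : w ∈ σ.sameCycleClass x ↔ σ.SameCycle x w := by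
  simp [sameCycleClass]

theorem sameCycleClass_eq_iff {a b : ι} :
    σ.sameCycleClass a = σ.sameCycleClass b ↔ σ.SameCycle a b := by
  refine ⟨fun hab => ?_, fun hab => ?_⟩
  · exact mem_sameCycleClass.1 (hab ▸ mem_sameCycleClass.2 SameCycle.rfl)
  · ext w
    simp only [mem_sameCycleClass]
    exact ⟨hab.symm.trans, hab.trans⟩

theorem disjoint_sameCycleClass_of_ne {a b : ι}
    (hab : σ.sameCycleClass a ≠ σ.sameCycleClass b) :
    _root_.Disjoint (σ.sameCycleClass a) (σ.sameCycleClass b) := by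
  refine disjoint_left.2 fun w hwa hwb => hab (sameCycleClass_eq_iff.2 ?_)
  exact (mem_sameCycleClass.1 hwa).trans (mem_sameCycleClass.1 hwb).symm

theorem sameCycleClass_eq_image_range (x : ι) :
    σ.sameCycleClass x = (range (minimalPeriod σ x)).image fun i => (σ ^ i) x := by
  ext w
  simp only [mem_sameCycleClass, mem_image, mem_range]
  constructor
  · intro hw
    obtain ⟨i, -, rfl⟩ := hw.exists_pow_eq'
    refine ⟨i % minimalPeriod σ x, Nat.mod_lt _ ?_, ?_⟩
    · exact minimalPeriod_pos_of_mem_periodicPts (σ.injective.mem_periodicPts x)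
    · rw [coe_pow, coe_pow, iterate_mod_minimalPeriod_eq]
  · rintro ⟨i, -, rfl⟩
    exact SameCycle.rfl.pow_right

theorem card_sameCycleClass (x : ι) : #(σ.sameCycleClass x) = minimalPeriod σ x := by
  rw [sameCycleClass_eq_image_range, card_image_of_injOn, card_range]
  intro i hi j hj hij
  simp only [coe_range] at hi hj
  exact iterate_injOn_Iio_minimalPeriod hi hj (by simpa only [coe_pow] using hij)

theorem minimalPeriod_le_card (x : ι) : minimalPeriod σ x ≤ Fintype.card ι :=
  card_sameCycleClass x ▸ card_le_univ _

theorem dvd_card_of_forall_minimalPeriod_eq {W : Finset ι} (hW : ∀ z ∈ W, σ z ∈ W) {j : ℕ}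
    (hj : ∀ z ∈ W, minimalPeriod σ z = j) : j ∣ #W := by
  rw [card_eq_sum_card_image σ.sameCycleClass W]
  refine dvd_sum fun c hc => ?_
  obtain ⟨z, hz, rfl⟩ := mem_image.1 hc
  have hfiber : {w ∈ W | σ.sameCycleClass w = σ.sameCycleClass z} = σ.sameCycleClass z := by
    ext w
    rw [mem_filter, eq_comm, sameCycleClass_eq_iff, mem_sameCycleClass]
    exact ⟨And.right, fun hzw => ⟨mem_of_sameCycle hW hz hzw, hzw⟩⟩
  rw [hfiber, card_sameCycleClass, hj z hz]

/-- The cardinality of an invariant set all of whose periods are multiples of `d` lies in the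
`d`-range of `σ`. -/
theorem exists_card_eq_sum_of_dvd_minimalPeriod (g : ℕ → ℕ)
    (hg : ∀ j, #{x | minimalPeriod σ x = j} = g j * j) {d : ℕ} {U : Finset ι}
    (hU : ∀ z ∈ U, σ z ∈ U) (hd : ∀ z ∈ U, d ∣ minimalPeriod σ z) :
    ∃ q : ℕ → ℕ, (∀ j, q j ≤ g j) ∧
      #U = ∑ j ∈ (range (Fintype.card ι + 1)).filter (d ∣ ·), q j * j := by
  set c : ℕ → ℕ := fun j => #{z ∈ U | minimalPeriod σ z = j}
  have hc_dvd (j : ℕ) : j ∣ c j := by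
    refine dvd_card_of_forall_minimalPeriod_eq (fun z hz => ?_) fun z hz => (mem_filter.1 hz).2
    obtain ⟨hzU, rfl⟩ := mem_filter.1 hz
    exact mem_filter.2 ⟨hU z hzU, minimalPeriod_apply (σ.injective.mem_periodicPts z)⟩
  have hc_le (j : ℕ) : c j ≤ g j * j :=
    hg j ▸ card_le_card (filter_subset_filter _ (subset_univ U))
  refine ⟨fun j => c j / j, fun j => Nat.div_le_of_le_mul (mul_comm (g j) j ▸ hc_le j), ?_⟩
  have hc_ne (j : ℕ) (_ : j ∈ range (Fintype.card ι + 1)) (hj : c j ≠ 0) : d ∣ j := by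
    obtain ⟨z, hz⟩ := card_ne_zero.1 hj
    obtain ⟨hzU, rfl⟩ := mem_filter.1 hz
    exact hd z hzU
  calc #U = ∑ j ∈ range (Fintype.card ι + 1), c j :=
        card_eq_sum_card_fiberwise fun z _ =>
          mem_range.2 (Nat.lt_succ_of_le (minimalPeriod_le_card z))
    _ = ∑ j ∈ (range (Fintype.card ι + 1)).filter (d ∣ ·), c j :=
        (sum_filter_of_ne hc_ne).symm
    _ = _ := sum_congr rfl fun j _ => (Nat.div_mul_cancel (hc_dvd j)).symm

end SameCycleClass

theorem exists_sameCycle_apply_eq_self {ι : Type*} {β y : Perm ι} {m : ℕ} {x : ι}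
    (hβ : β * y * β⁻¹ = y ^ (m + 1)) (hm : m.Coprime (minimalPeriod y x))
    (hx : y.SameCycle x (β x)) : ∃ z, y.SameCycle x z ∧ β z = z := by
  obtain ⟨b, hb⟩ := hx
  obtain ⟨u, v, huv⟩ := Nat.isCoprime_iff_coprime.2 hm
  set r := minimalPeriod y x
  have hyr : (y ^ (r : ℤ)) x = x := by
    rw [zpow_natCast, coe_pow]
    exact iterate_minimalPeriod
  -- `t := -b u` solves `(m + 1) t + b ≡ t (mod r)`, the fixed-point equation of `β` on the
  -- cycle `t ↦ y^t x`
  have ht : ((m + 1 : ℕ) : ℤ) * (-b * u) + b = -b * u + r * (b * v) := by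
    push_cast
    linear_combination (-b) * huv
  refine ⟨(y ^ (-b * u)) x, ⟨-b * u, rfl⟩, ?_⟩
  calc β ((y ^ (-b * u)) x) = (β * y ^ (-b * u) * β⁻¹) (β x) := by simp [mul_apply]
    _ = (y ^ (((m + 1 : ℕ) : ℤ) * (-b * u) + b)) x := by
        rw [← conj_zpow, hβ, ← zpow_natCast, ← zpow_mul, ← hb, zpow_add, mul_apply]
    _ = (y ^ (-b * u)) x := by
        rw [ht, zpow_add, mul_apply, zpow_mul y r, zpow_apply_eq_self_of_apply_eq_self hyr]

section ConjEqSq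

variable {ι : Type*} [Fintype ι] {α y : Perm ι}

theorem odd_minimalPeriod_of_conj_eq_sq (h : α * y * α⁻¹ = y ^ 2) (x : ι) :
    Odd (minimalPeriod y x) := by
  have hper : IsPeriodicPt y (2 ^ orderOf α - 1) x := by
    rw [IsPeriodicPt, IsFixedPt, ← coe_pow, pow_two_pow_orderOf_sub_one_eq_one h, one_apply]
  refine Odd.of_dvd_nat ?_ hper.minimalPeriod_dvd
  exact Nat.Even.sub_odd Nat.one_le_two_pow
    ((Nat.even_pow' (orderOf_pos α).ne').2 even_two) odd_one

theorem sameCycle_apply_iff_of_conj_eq_sq (h : α * y * α⁻¹ = y ^ 2) {a b : ι} :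
    y.SameCycle (α a) (α b) ↔ y.SameCycle a b := by
  -- `y` is a power of `y²`, so `y` and `y² = α y α⁻¹` have the same cycles
  have hy : (y ^ 2) ^ 2 ^ (orderOf α - 1) = y := by
    rw [← pow_mul, ← pow_succ', Nat.sub_add_cancel (orderOf_pos α),
      pow_two_pow_orderOf_eq_self h]
  have hsq : y.SameCycle (α a) (α b) ↔ (y ^ 2).SameCycle (α a) (α b) :=
    ⟨fun hab => SameCycle.of_pow (hy.symm ▸ hab), SameCycle.of_pow⟩
  simp [hsq, ← h, sameCycle_conj]

theorem sameCycle_pow_apply_iff_of_conj_eq_sq (h : α * y * α⁻¹ = y ^ 2) (i : ℕ) {a b : ι} :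
    y.SameCycle ((α ^ i) a) ((α ^ i) b) ↔ y.SameCycle a b := by
  induction i with
  | zero => simp
  | succ i ih => rw [pow_succ', mul_apply, mul_apply, sameCycle_apply_iff_of_conj_eq_sq h, ih]

variable [DecidableEq ι]

theorem pow_smul_sameCycleClass (h : α * y * α⁻¹ = y ^ 2) (i : ℕ) (a : ι) :
    (α ^ i) • y.sameCycleClass a = y.sameCycleClass ((α ^ i) a) := by
  ext w
  simp only [mem_smul_finset, mem_sameCycleClass]
  constructor
  · rintro ⟨v, hv, rfl⟩
    exact (sameCycle_pow_apply_iff_of_conj_eq_sq h i).2 hv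
  · intro hw
    refine ⟨(α ^ i)⁻¹ w, ?_, by simp⟩
    rw [← sameCycle_pow_apply_iff_of_conj_eq_sq h i]
    simpa using hw

variable (α y) in
noncomputable def cyclePeriod (x : ι) : ℕ := minimalPeriod (α • ·) (y.sameCycleClass x)

variable (α y) in
noncomputable def cycleBlock (x : ι) : Finset ι :=
  (range (cyclePeriod α y x)).biUnion fun i => (α ^ i) • y.sameCycleClass x

theorem cyclePeriod_pos (x : ι) : 0 < cyclePeriod α y x := by
  refine IsPeriodicPt.minimalPeriod_pos (orderOf_pos α) ?_
  rw [IsPeriodicPt, IsFixedPt, smul_iterate_apply, pow_orderOf_eq_one, one_smul]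

theorem cyclePeriod_dvd_iff (h : α * y * α⁻¹ = y ^ 2) {x : ι} {p : ℕ} :
    cyclePeriod α y x ∣ p ↔ y.SameCycle x ((α ^ p) x) := by
  rw [cyclePeriod, ← isPeriodicPt_iff_minimalPeriod_dvd, IsPeriodicPt, IsFixedPt,
    smul_iterate_apply, pow_smul_sameCycleClass h, sameCycleClass_eq_iff, sameCycle_comm]

theorem card_cycleBlock (h : α * y * α⁻¹ = y ^ 2) (x : ι) :
    #(cycleBlock α y x) = cyclePeriod α y x * minimalPeriod y x := by
  rw [cycleBlock, card_biUnion, sum_congr rfl fun i _ => card_smul_finset _ _, sum_const,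
    card_range, card_sameCycleClass, smul_eq_mul]
  intro i hi j hj hij
  simp only [coe_range] at hi hj
  have hne : (α ^ i) • y.sameCycleClass x ≠ (α ^ j) • y.sameCycleClass x := by
    rw [← smul_iterate_apply, ← smul_iterate_apply]
    exact fun hij' => hij (iterate_injOn_Iio_minimalPeriod hi hj hij')
  rw [pow_smul_sameCycleClass h, pow_smul_sameCycleClass h] at hne
  simpa only [onFun, pow_smul_sameCycleClass h] using disjoint_sameCycleClass_of_ne hne

theorem mem_cycleBlock_of_sameCycle {x z : ι} (hxz : y.SameCycle x z) : z ∈ cycleBlock α y x :=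
  mem_biUnion.2 ⟨0, mem_range.2 (cyclePeriod_pos x), by simpa using hxz⟩

theorem apply_mem_cycleBlock {x z : ι} (hz : z ∈ cycleBlock α y x) :
    α z ∈ cycleBlock α y x := by
  obtain ⟨i, -, hzi⟩ := mem_biUnion.1 hz
  refine mem_biUnion.2
    ⟨(i + 1) % cyclePeriod α y x, mem_range.2 (Nat.mod_lt _ (cyclePeriod_pos x)), ?_⟩
  have hmod : (α ^ ((i + 1) % cyclePeriod α y x)) • y.sameCycleClass x
      = (α ^ (i + 1)) • y.sameCycleClass x := by
    rw [← smul_iterate_apply, ← smul_iterate_apply, cyclePeriod, iterate_mod_minimalPeriod_eq]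
  rw [hmod, pow_succ', mul_smul]
  exact smul_mem_smul_finset hzi

theorem cyclePeriod_dvd_minimalPeriod (h : α * y * α⁻¹ = y ^ 2) {x z : ι}
    (hz : z ∈ cycleBlock α y x) : cyclePeriod α y x ∣ minimalPeriod α z := by
  obtain ⟨i, -, hzi⟩ := mem_biUnion.1 hz
  set p := minimalPeriod α z
  rw [pow_smul_sameCycleClass h, mem_sameCycleClass] at hzi
  have hzp : (α ^ p) z = z := by rw [coe_pow]; exact iterate_minimalPeriod
  have hip : y.SameCycle ((α ^ i) ((α ^ p) x)) z := by
    rw [← mul_apply, ← pow_add, add_comm, pow_add, mul_apply, ← hzp]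
    exact (sameCycle_pow_apply_iff_of_conj_eq_sq h p).2 hzi
  exact (cyclePeriod_dvd_iff h).2
    ((sameCycle_pow_apply_iff_of_conj_eq_sq h i).1 (hzi.trans hip.symm))

end ConjEqSq

end Equiv.Perm

/-- Theorem (A1). Let `α ∈ Sₙ` have type `⟨g₁, …, gₙ⟩` (so `g j * j` points lie on
cycles of `α` of length `j`). If for every odd `r = 2m+1 ≥ 3` and every `d ≥ 1`
with `d·r ∈ F_d(α)` (the `d`-range of `α`, i.e. `d·r` is a sum `Σ q_j·j` over
`j ≤ n` divisible by `d` with `0 ≤ q_j ≤ g_j`) one has `g_d = 0` and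
`gcd(2^d - 1, r) = 1`, then `α ∘ y ∘ α⁻¹ = y²` has only the trivial solution. -/
theorem stmt_10 (n : ℕ) (α : Equiv.Perm (Fin n)) (g : ℕ → ℕ)
    (hg : ∀ j : ℕ,
      (Finset.univ.filter fun x : Fin n => Function.minimalPeriod (⇑α) x = j).card
        = g j * j)
    (h : ∀ r d : ℕ, 3 ≤ r → Odd r → 1 ≤ d →
      (∃ q : ℕ → ℕ, (∀ j, q j ≤ g j) ∧
        d * r = ∑ j ∈ (Finset.range (n + 1)).filter (fun j => d ∣ j), q j * j) →
      g d = 0 ∧ Nat.gcd (2 ^ d - 1) r = 1) :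
    ∀ y : Equiv.Perm (Fin n), α * y * α⁻¹ = y ^ 2 → y = 1 := by
  intro y hy
  by_contra hne
  obtain ⟨x, hx⟩ : ∃ x, y x ≠ x := by simpa [Equiv.ext_iff] using hne
  set r := minimalPeriod y x
  set k := cyclePeriod α y x
  have hr_odd : Odd r := odd_minimalPeriod_of_conj_eq_sq hy x
  have hr : 3 ≤ r := by
    have hr1 : r ≠ 1 := fun h1 => hx (minimalPeriod_eq_one_iff_isFixedPt.1 h1)
    obtain ⟨m, hm⟩ := hr_odd
    omega
  obtain ⟨q, hq, hsum⟩ := exists_card_eq_sum_of_dvd_minimalPeriod g hg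
    (fun _ => apply_mem_cycleBlock) (fun _ => cyclePeriod_dvd_minimalPeriod hy (x := x))
  obtain ⟨hgk, hcop⟩ := h r k hr hr_odd (cyclePeriod_pos x)
    ⟨q, hq, by rw [← card_cycleBlock hy, hsum, Fintype.card_fin]⟩
  have hαk : α ^ k * y * (α ^ k)⁻¹ = y ^ (2 ^ k - 1 + 1) := by
    rw [Nat.sub_add_cancel Nat.one_le_two_pow, pow_mul_mul_inv_pow_eq_pow_two_pow hy]
  obtain ⟨z, hxz, hz⟩ :=
    exists_sameCycle_apply_eq_self hαk hcop ((cyclePeriod_dvd_iff hy).1 dvd_rfl)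
  have hzk : minimalPeriod α z = k := Nat.dvd_antisymm
    (IsPeriodicPt.minimalPeriod_dvd (by rw [IsPeriodicPt, IsFixedPt, ← coe_pow]; exact hz))
    (cyclePeriod_dvd_minimalPeriod hy (mem_cycleBlock_of_sameCycle hxz))
  have hpos : 0 < g k * k := hg k ▸ card_pos.2 ⟨z, mem_filter.2 ⟨mem_univ z, hzk⟩⟩
  simp [hgk] at hpos
end

section
/- Let α ∈ Sₙ have type ⟨g₁, g₂, …, gₙ⟩ and assume: g₁ = 0 (α has no fixed points); any two distinct cycle lengths of α are relatively prime (g_a ≠ 0, g_b ≠ 0 and a ≠ b imply gcd(a,b) = 1); every cycle length occurs at most twice (g_a ≠ 0 implies 1 ≤ g_a ≤ 2); and for every cycle length a (g_a ≠ 0) and every prime divisor p ≥ 3 of a, the number 2^{a/p} − 1 is not divisible by p. Then the equation α ∘ y ∘ α⁻¹ = y² has only the trivial solution y = 1. -/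
/-!
If `α y α⁻¹ = y²` and `y ≠ 1`, then `y = y ^ 2 ^ m` for `m = orderOf α`, so `y` has odd order and
some power `z` of `y` has odd prime order `q` and still satisfies `α z α⁻¹ = z²`. Consequently `α`
permutes the `z`-orbits. Index a nontrivial `z`-orbit `B` by `ZMod q` and let `s` be the period of
`B` under this permutation: on `B`, `α ^ s` is the affine map `j ↦ 2 ^ s * j + c`, and the
`α`-period of a point of `B` is `s` times its period under that map. If `2 ^ s ≡ 1 [MOD q]` and
`c = 0`, the `q ≥ 3` points of `B` lie on distinct `α`-cycles of length `s`. If `2 ^ s ≡ 1` and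
`c ≠ 0`, `α` has a cycle of length `s * q` with `q ∣ 2 ^ s - 1`. Otherwise the affine map has a
fixed point and a non-fixed point, which gives cycle lengths `s` and a proper multiple of `s`; being
coprime, they force `s = 1`, a fixed point of `α`.
-/

open Function

theorem Function.Semiconj.minimalPeriod_eq {α β : Type*} {f : α → β} {ga : α → α} {gb : β → β}
    (h : Semiconj f ga gb) (hf : Injective f) (x : α) :
    minimalPeriod gb (f x) = minimalPeriod ga x := by
  refine minimalPeriod_eq_minimalPeriod_iff.mpr fun n => ?_
  simp only [IsPeriodicPt, IsFixedPt, ← (h.iterate_right n).eq, hf.eq_iff]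

section Group

variable {G : Type*} [Group G] {a b : G}

theorem pow_mul_pow_eq_of_conj_eq_pow {e : ℕ} (h : a * b * a⁻¹ = b ^ e) (t k : ℕ) :
    a ^ t * b ^ k = b ^ (e ^ t * k) * a ^ t := by
  have hstep (k : ℕ) : a * b ^ k = b ^ (e * k) * a := by
    rw [← mul_inv_eq_iff_eq_mul, ← conj_pow, h, ← pow_mul]
  induction t generalizing k with
  | zero => simp
  | succ t ih =>
    rw [pow_succ', mul_assoc, ih, ← mul_assoc, hstep, mul_assoc, pow_succ,
      Nat.mul_right_comm, Nat.mul_comm _ e]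

theorem odd_orderOf_of_conj_eq_sq (ha : IsOfFinOrder a) (h : a * b * a⁻¹ = b ^ 2) :
    Odd (orderOf b) := by
  have hfix : b ^ 2 ^ orderOf a = b := by
    simpa [pow_orderOf_eq_one] using (pow_mul_pow_eq_of_conj_eq_pow h (orderOf a) 1).symm
  have hdvd : orderOf b ∣ 2 ^ orderOf a - 1 := by
    refine orderOf_dvd_of_pow_eq_one (mul_eq_right (b := b).mp ?_)
    rw [← pow_succ, Nat.sub_add_cancel Nat.one_le_two_pow, hfix]
  refine Odd.of_dvd_nat (Nat.Even.sub_odd Nat.one_le_two_pow ?_ odd_one) hdvd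
  exact (Nat.even_pow' ha.orderOf_pos.ne').mpr even_two

theorem exists_prime_orderOf_of_conj_eq_sq (ha : IsOfFinOrder a) (h : a * b * a⁻¹ = b ^ 2)
    (hb : b ≠ 1) : ∃ p c, p.Prime ∧ p ≠ 2 ∧ orderOf c = p ∧ a * c * a⁻¹ = c ^ 2 := by
  have hodd := odd_orderOf_of_conj_eq_sq ha h
  set p := (orderOf b).minFac
  have hp : p.Prime := Nat.minFac_prime (mt orderOf_eq_one_iff.mp hb)
  refine ⟨p, b ^ (orderOf b / p), hp, ?_, orderOf_pow_orderOf_div hodd.pos.ne' (Nat.minFac_dvd _),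
    by rw [← conj_pow, h, pow_right_comm]⟩
  intro hp2
  exact Nat.not_even_iff_odd.mpr hodd (even_iff_two_dvd.mpr (hp2 ▸ Nat.minFac_dvd _))

end Group

namespace Equiv.Perm

variable {X : Type*}

def zmodOrbit (z : Perm X) (b : X) (q : ℕ) (j : ZMod q) : X := (z ^ j.val) b

section Orbit

variable {z : Perm X} {b : X} {q : ℕ}

@[simp]
theorem zmodOrbit_zero : zmodOrbit z b q 0 = b := by
  simp [zmodOrbit]

theorem zmodOrbit_natCast (hz : orderOf z = q) (k : ℕ) : zmodOrbit z b q k = (z ^ k) b := by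
  rw [zmodOrbit, ZMod.val_natCast, ← hz, pow_mod_orderOf]

theorem pow_apply_zmodOrbit [NeZero q] (hz : orderOf z = q) (k : ℕ) (j : ZMod q) :
    (z ^ k) (zmodOrbit z b q j) = zmodOrbit z b q (k + j) := by
  rw [← ZMod.natCast_zmod_val j, ← Nat.cast_add, zmodOrbit_natCast hz, zmodOrbit_natCast hz,
    pow_add, mul_apply]

theorem zmodOrbit_injective [Fact q.Prime] (hz : orderOf z = q) (hb : z b ≠ b) :
    Injective (zmodOrbit z b q) := by
  have hper : minimalPeriod z b = q := by
    refine minimalPeriod_eq_prime ?_ hb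
    rw [IsPeriodicPt, IsFixedPt, ← coe_pow, ← hz, pow_orderOf_eq_one, one_apply]
  intro i j hij
  simp only [zmodOrbit, coe_pow] at hij
  exact ZMod.val_injective q <|
    (iterate_eq_iterate_iff_of_lt_minimalPeriod (hper ▸ i.val_lt) (hper ▸ j.val_lt)).mp hij

variable {α : Perm X}

theorem pow_apply_zmodOrbit_of_conj (hα : α * z * α⁻¹ = z ^ 2) (t : ℕ) (j : ZMod q) :
    (α ^ t) (zmodOrbit z b q j) = (z ^ (2 ^ t * j.val)) ((α ^ t) b) := by
  simp only [zmodOrbit, ← mul_apply, pow_mul_pow_eq_of_conj_eq_pow hα]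

theorem pow_apply_zmodOrbit_of_eq [NeZero q] (hα : α * z * α⁻¹ = z ^ 2) (hz : orderOf z = q)
    {t : ℕ} {c : ZMod q} (hc : (α ^ t) b = zmodOrbit z b q c) (j : ZMod q) :
    (α ^ t) (zmodOrbit z b q j) = zmodOrbit z b q (2 ^ t * j + c) := by
  rw [pow_apply_zmodOrbit_of_conj hα, hc, pow_apply_zmodOrbit hz]
  push_cast [ZMod.natCast_zmod_val]
  rfl

theorem pow_apply_mem_range_zmodOrbit_of_apply_mem [NeZero q] (hα : α * z * α⁻¹ = z ^ 2)
    (hz : orderOf z = q) {t : ℕ} {i : ZMod q}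
    (h : (α ^ t) (zmodOrbit z b q i) ∈ Set.range (zmodOrbit z b q)) :
    (α ^ t) b ∈ Set.range (zmodOrbit z b q) := by
  obtain ⟨j, hj⟩ := h
  rw [pow_apply_zmodOrbit_of_conj hα] at hj
  refine ⟨j - (2 ^ t * i.val : ℕ), (z ^ (2 ^ t * i.val)).injective ?_⟩
  rw [pow_apply_zmodOrbit hz, add_sub_cancel, hj]

theorem image_pow_range_zmodOrbit_eq_iff [Fact q.Prime] (hq2 : q ≠ 2)
    (hα : α * z * α⁻¹ = z ^ 2) (hz : orderOf z = q) {t : ℕ} :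
    (α ^ t) '' Set.range (zmodOrbit z b q) = Set.range (zmodOrbit z b q) ↔
      (α ^ t) b ∈ Set.range (zmodOrbit z b q) := by
  refine ⟨fun h => h ▸ Set.mem_image_of_mem _ ⟨0, zmodOrbit_zero⟩, fun ⟨c, hc⟩ => ?_⟩
  have h2 : (2 : ZMod q) ^ t ≠ 0 := pow_ne_zero t (Ring.two_ne_zero (by rwa [ZMod.ringChar_zmod_n]))
  have hsurj : Surjective fun j : ZMod q => 2 ^ t * j + c := fun w =>
    ⟨(w - c) / 2 ^ t, by simp only [mul_div_cancel₀ _ h2, sub_add_cancel]⟩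
  have hcomp : (α ^ t) ∘ zmodOrbit z b q = zmodOrbit z b q ∘ fun j => 2 ^ t * j + c :=
    funext (pow_apply_zmodOrbit_of_eq hα hz hc.symm)
  rw [← Set.range_comp, hcomp, Set.range_comp, hsurj.range_eq, Set.image_univ]

end Orbit

end Equiv.Perm

open Equiv Perm

section Periods

variable {X : Type*} {α z : Perm X} {b : X} {q : ℕ}

theorem pow_apply_mem_range_zmodOrbit_iff [Fact q.Prime] (hq2 : q ≠ 2)
    (hα : α * z * α⁻¹ = z ^ 2) (hz : orderOf z = q) {t : ℕ} :
    (α ^ t) b ∈ Set.range (zmodOrbit z b q) ↔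
      minimalPeriod (Set.image α) (Set.range (zmodOrbit z b q)) ∣ t := by
  rw [← isPeriodicPt_iff_minimalPeriod_dvd, IsPeriodicPt, IsFixedPt, ← Set.image_iterate_eq,
    ← coe_pow, image_pow_range_zmodOrbit_eq_iff hq2 hα hz]

theorem minimalPeriod_image_pos [Finite X] (α : Perm X) (s : Set X) :
    0 < minimalPeriod (Set.image α) s :=
  minimalPeriod_pos_of_mem_periodicPts ((Set.image_injective.mpr α.injective).mem_periodicPts s)

variable [Fact q.Prime] {s : ℕ}

theorem minimalPeriod_zmodOrbit [Finite X] (hq2 : q ≠ 2) (hα : α * z * α⁻¹ = z ^ 2)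
    (hz : orderOf z = q) (hb : z b ≠ b)
    (hs : minimalPeriod (Set.image α) (Set.range (zmodOrbit z b q)) = s) {c : ZMod q}
    (hc : (α ^ s) b = zmodOrbit z b q c) (j : ZMod q) :
    minimalPeriod α (zmodOrbit z b q j) = s * minimalPeriod (fun i => 2 ^ s * i + c) j := by
  have hdvd : s ∣ minimalPeriod α (zmodOrbit z b q j) := by
    rw [← hs, ← pow_apply_mem_range_zmodOrbit_iff hq2 hα hz]
    exact pow_apply_mem_range_zmodOrbit_of_apply_mem hα hz
      ⟨j, by rw [coe_pow, iterate_minimalPeriod]⟩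
  have hsemi : Semiconj (zmodOrbit z b q) (fun i => 2 ^ s * i + c) ⇑(α ^ s) := fun i =>
    (pow_apply_zmodOrbit_of_eq hα hz hc i).symm
  rw [← hsemi.minimalPeriod_eq (zmodOrbit_injective hz hb), coe_pow,
    minimalPeriod_iterate_eq_div_gcd (hs ▸ minimalPeriod_image_pos α _).ne', Nat.gcd_eq_right hdvd,
    Nat.mul_div_cancel' hdvd]

theorem mul_le_card_filter_minimalPeriod_eq [Fintype X] (hq2 : q ≠ 2)
    (hα : α * z * α⁻¹ = z ^ 2) (hz : orderOf z = q) (hb : z b ≠ b)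
    (hs : minimalPeriod (Set.image α) (Set.range (zmodOrbit z b q)) = s)
    (hfix : (α ^ s) b = b) (h2 : (2 : ZMod q) ^ s = 1) :
    s * q ≤ (Finset.univ.filter fun x => minimalPeriod α x = s).card := by
  have hper (j : ZMod q) : minimalPeriod α (zmodOrbit z b q j) = s := by
    rw [minimalPeriod_zmodOrbit hq2 hα hz hb hs (c := 0) (by rw [hfix, zmodOrbit_zero]) j]
    simp only [h2, one_mul, add_zero]
    exact (congrArg (s * ·) minimalPeriod_id).trans (mul_one s)
  have hsep {t t' : ℕ} {i j : ZMod q} (hle : t ≤ t') (hlt : t' < s)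
      (h : (α ^ t) (zmodOrbit z b q i) = (α ^ t') (zmodOrbit z b q j)) : t = t' := by
    rw [← Nat.add_sub_cancel' hle, pow_add, mul_apply] at h
    have hd : s ∣ t' - t := by
      rw [← hs, ← pow_apply_mem_range_zmodOrbit_iff hq2 hα hz]
      exact pow_apply_mem_range_zmodOrbit_of_apply_mem hα hz ⟨i, (α ^ t).injective h⟩
    have := Nat.eq_zero_of_dvd_of_lt hd (by omega)
    omega
  calc s * q = (Finset.range s ×ˢ (Finset.univ : Finset (ZMod q))).card := by simp [ZMod.card]
    _ ≤ _ := by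
      refine Finset.card_le_card_of_injOn (fun p => (α ^ p.1) (zmodOrbit z b q p.2)) ?_ ?_
      · rintro ⟨t, j⟩ -
        refine Finset.mem_filter.mpr ⟨Finset.mem_univ _, ?_⟩
        dsimp only
        rw [coe_pow, minimalPeriod_apply_iterate (α.injective.mem_periodicPts _), hper]
      · rintro ⟨t, i⟩ hti ⟨t', j⟩ htj h
        simp only [Finset.coe_product, Set.mem_prod, Finset.mem_coe, Finset.mem_range] at hti htj h
        obtain rfl : t = t' := (le_total t t').elim (fun hle => hsep hle htj.1 h)
          (fun hle => (hsep hle hti.1 h.symm).symm)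
        rw [zmodOrbit_injective hz hb ((α ^ t).injective h)]

theorem minimalPeriod_add_const_zmod {c : ZMod q} (hc : c ≠ 0) (j : ZMod q) :
    minimalPeriod (· + c) j = q := by
  refine minimalPeriod_eq_prime ?_ (by simpa [IsFixedPt] using hc)
  rw [IsPeriodicPt, IsFixedPt, add_right_iterate, nsmul_eq_mul, ZMod.natCast_self, zero_mul]
  exact add_zero j

theorem exists_isFixedPt_and_not_isFixedPt_mul_add {K : Type*} [Field K] {a : K} (ha : a ≠ 1)
    (c : K) : ∃ i j, IsFixedPt (fun x => a * x + c) i ∧ ¬IsFixedPt (fun x => a * x + c) j := by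
  have h1a : 1 - a ≠ 0 := sub_ne_zero.mpr ha.symm
  have hfix : a * (c / (1 - a)) + c = c / (1 - a) := by
    field_simp
    ring
  refine ⟨_, c / (1 - a) + 1, hfix, fun h => ha ?_⟩
  have h : a * (c / (1 - a) + 1) + c = c / (1 - a) + 1 := h
  linear_combination h - hfix

theorem exists_minimalPeriod_trichotomy [Fintype X] (hq2 : q ≠ 2)
    (hα : α * z * α⁻¹ = z ^ 2) (hz : orderOf z = q) (hb : z b ≠ b) :
    ∃ s, 0 < s ∧
      (s * q ≤ (Finset.univ.filter fun x => minimalPeriod α x = s).card ∨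
        (q ∣ 2 ^ s - 1 ∧ ∃ x, minimalPeriod α x = s * q) ∨
        ∃ x y, minimalPeriod α x = s ∧ minimalPeriod α y ≠ s ∧ s ∣ minimalPeriod α y) := by
  set s := minimalPeriod (Set.image α) (Set.range (zmodOrbit z b q)) with hs
  have hspos : 0 < s := minimalPeriod_image_pos α _
  obtain ⟨c, hc⟩ : (α ^ s) b ∈ Set.range (zmodOrbit z b q) :=
    (pow_apply_mem_range_zmodOrbit_iff hq2 hα hz).mpr dvd_rfl
  have hmp := minimalPeriod_zmodOrbit hq2 hα hz hb hs.symm hc.symm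
  refine ⟨s, hspos, ?_⟩
  by_cases h2 : (2 : ZMod q) ^ s = 1
  · rcases eq_or_ne c 0 with rfl | hc0
    · exact .inl <| mul_le_card_filter_minimalPeriod_eq hq2 hα hz hb hs.symm
        (by rw [← hc, zmodOrbit_zero]) h2
    refine .inr (.inl ⟨?_, zmodOrbit z b q 0, ?_⟩)
    · refine (Nat.modEq_iff_dvd' Nat.one_le_two_pow).mp ((ZMod.natCast_eq_natCast_iff _ _ _).mp ?_)
      push_cast
      exact h2.symm
    · simp only [hmp, h2, one_mul]
      rw [minimalPeriod_add_const_zmod hc0]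
  · obtain ⟨i, j, hi, hj⟩ := exists_isFixedPt_and_not_isFixedPt_mul_add h2 c
    refine .inr (.inr ⟨zmodOrbit z b q i, zmodOrbit z b q j, ?_, ?_, ?_⟩)
    · rw [hmp, minimalPeriod_eq_one_iff_isFixedPt.mpr hi, mul_one]
    · rw [hmp, Ne, Nat.mul_eq_left hspos.ne', minimalPeriod_eq_one_iff_isFixedPt]
      exact hj
    · rw [hmp]
      exact dvd_mul_right _ _

end Periods

/-- Theorem (A2). Let `α ∈ Sₙ` have type `⟨g₁, …, gₙ⟩` (so `g j * j` points lie on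
cycles of `α` of length `j`). Assume `g₁ = 0`, any two distinct cycle lengths of
`α` are relatively prime, every cycle length occurs at most twice, and for every
cycle length `a` and every prime `p ≥ 3` dividing `a` the number `2^{a/p} - 1` is
not divisible by `p`. Then `α ∘ y ∘ α⁻¹ = y²` has only the trivial solution. -/
theorem stmt_11 (n : ℕ) (α : Equiv.Perm (Fin n)) (g : ℕ → ℕ)
    (hg : ∀ j : ℕ,
      (Finset.univ.filter fun x : Fin n => Function.minimalPeriod (⇑α) x = j).card
        = g j * j)
    (hg1 : g 1 = 0)
    (hcop : ∀ a b : ℕ, 1 ≤ a → 1 ≤ b → g a ≠ 0 → g b ≠ 0 → a ≠ b → Nat.gcd a b = 1)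
    (hle : ∀ a : ℕ, 1 ≤ a → g a ≠ 0 → g a ≤ 2)
    (hnd : ∀ a : ℕ, 1 ≤ a → g a ≠ 0 →
      ∀ p : ℕ, p.Prime → 3 ≤ p → p ∣ a → ¬ p ∣ 2 ^ (a / p) - 1) :
    ∀ y : Equiv.Perm (Fin n), α * y * α⁻¹ = y ^ 2 → y = 1 := by
  intro y hy
  by_contra hy1
  obtain ⟨q, z, hq, hq2, hz, hαz⟩ :=
    exists_prime_orderOf_of_conj_eq_sq (isOfFinOrder_of_finite α) hy hy1
  have : Fact q.Prime := ⟨hq⟩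
  have hq3 : 3 ≤ q := by have := hq.two_le; omega
  obtain ⟨b, hb⟩ : ∃ b, z b ≠ b := by
    by_contra! h
    exact hq.one_lt.ne' (hz ▸ orderOf_eq_one_iff.mpr (Equiv.ext h))
  have hpos (x : Fin n) : 0 < minimalPeriod α x :=
    minimalPeriod_pos_of_mem_periodicPts (α.injective.mem_periodicPts x)
  have hgx (x : Fin n) : g (minimalPeriod α x) ≠ 0 := by
    intro h0
    have hempty := hg (minimalPeriod α x)
    rw [h0, zero_mul, Finset.card_eq_zero] at hempty
    exact Finset.eq_empty_iff_forall_notMem.mp hempty x (by simp)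
  obtain ⟨s, hs, hcount | ⟨hqs, x, hx⟩ | ⟨x, w, hx, hw, hdvd⟩⟩ :=
    exists_minimalPeriod_trichotomy hq2 hαz hz hb
  · have hgs : q ≤ g s := Nat.le_of_mul_le_mul_right (by rw [mul_comm, ← hg]; exact hcount) hs
    have := hle s hs (by omega)
    omega
  · refine hnd (s * q) (hx ▸ hpos x) (hx ▸ hgx x) q hq hq3 (dvd_mul_left q s) ?_
    rwa [Nat.mul_div_cancel s hq.pos]
  · have hgcd := hcop s _ hs (hpos w) (hx ▸ hgx x) (hgx w) (Ne.symm hw)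
    rw [Nat.gcd_eq_left hdvd] at hgcd
    exact hgx x (by rw [hx, hgcd, hg1])
end

section
/- Let n ≥ 3 and let p ≥ 3 be a prime divisor of n such that p divides 2^{n/p} − 1. Then for every cyclic permutation α ∈ Sₙ of length n, the equation α ∘ y ∘ α⁻¹ = y² has a non-trivial solution y ≠ 1. -/
/-!
Every `n`-cycle is conjugate to the rotation `ρ : x ↦ x + 1` of `Fin n`, and conjugation preserves
the equation, so it suffices to solve `ρ y ρ⁻¹ = y²`. Write `n = m p`. If `d : Fin n → Fin n` takes
values in `m ℤ / n ℤ` and depends only on `x mod m`, then `y x = x + d x` is a permutation (a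
translation on each residue class mod `m`), and `ρ y ρ⁻¹ = y²` amounts to `d x = 2 d (x + 1)`.
The choice `d x = m 2^(m - x mod m)` satisfies this recursion exactly except at the wrap-around
`x ≡ -1 mod m`, where it becomes `2 ≡ 2^(m+1) mod p`, i.e. `p ∣ 2^m - 1`; the same congruence
forces `p ∤ 2^m`, so `d 0 ≠ 0` and `y ≠ 1`.
-/

open Equiv

namespace Equiv.Perm

variable {A : Type*} [AddCommGroup A]

def shear (d : A → A) (hd : ∀ x y, d (x + d y) = d x) : Perm A where
  toFun x := x + d x
  invFun x := x - d x
  left_inv x := by simp [hd]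
  right_inv x := by
    have h := hd (x - d x) x
    simp only [sub_add_cancel] at h
    simp [← h]

theorem shear_apply (d : A → A) (hd : ∀ x y, d (x + d y) = d x) (x : A) :
    shear d hd x = x + d x := rfl

theorem shear_eq_one_iff (d : A → A) (hd : ∀ x y, d (x + d y) = d x) :
    shear d hd = 1 ↔ d = 0 := by
  simp [Perm.ext_iff, funext_iff, shear_apply]

theorem addRight_mul_shear_mul_inv_eq_sq (d : A → A) (hd : ∀ x y, d (x + d y) = d x) (a : A)
    (hrec : ∀ x, d x = d (x + a) + d (x + a)) :
    Equiv.addRight a * shear d hd * (Equiv.addRight a)⁻¹ = shear d hd ^ 2 := by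
  rw [mul_inv_eq_iff_eq_mul]
  ext x
  simp only [Perm.mul_apply, sq, shear_apply, Equiv.coe_addRight, hd, hrec x]
  abel

end Equiv.Perm

theorem finRotate_eq_addRight_one (n : ℕ) [NeZero n] : finRotate n = Equiv.addRight 1 := by
  obtain ⟨k, rfl⟩ := Nat.exists_eq_succ_of_ne_zero (NeZero.ne n)
  ext x
  simp [finRotate_apply]

section FinCast

open Fin.NatCast

theorem Fin.val_add_natCast_mod_of_dvd {m n : ℕ} [NeZero n] (hmn : m ∣ n) (x : Fin n) (k : ℕ) :
    (x + (k : Fin n) : Fin n).val % m = (x.val + k) % m := by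
  rw [Fin.val_add, Fin.val_natCast, Nat.mod_mod_of_dvd _ hmn, Nat.add_mod, Nat.mod_mod_of_dvd _ hmn,
    ← Nat.add_mod]

variable {m n : ℕ} [NeZero n]

def twoPowOffset (m : ℕ) (x : Fin n) : Fin n := ((m * 2 ^ (m - x.val % m) : ℕ) : Fin n)

theorem twoPowOffset_add_twoPowOffset (hmn : m ∣ n) (x y : Fin n) :
    twoPowOffset m (x + twoPowOffset m y) = twoPowOffset m x := by
  unfold twoPowOffset
  rw [Fin.val_add_natCast_mod_of_dvd hmn, Nat.add_mul_mod_self_left]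

theorem twoPowOffset_eq_add_self {p : ℕ} (hn : n = m * p) (hm : 0 < m) (h2 : 2 ^ m ≡ 1 [MOD p])
    (x : Fin n) : twoPowOffset m x = twoPowOffset m (x + 1) + twoPowOffset m (x + 1) := by
  have hx : (x + 1).val % m = (x.val % m + 1) % m := by
    rw [← Nat.cast_one, Fin.val_add_natCast_mod_of_dvd (hn ▸ dvd_mul_right m p), Nat.mod_add_mod]
  suffices m * 2 ^ (m - x.val % m) ≡
      m * 2 ^ (m - (x + 1).val % m) + m * 2 ^ (m - (x + 1).val % m) [MOD n] by
    rw [twoPowOffset, twoPowOffset, ← Nat.cast_add, Fin.ext_iff, Fin.val_natCast, Fin.val_natCast]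
    exact this
  rw [hx]
  rcases Nat.lt_or_ge (x.val % m + 1) m with h | h
  · rw [Nat.mod_eq_of_lt h, show m - x.val % m = m - (x.val % m + 1) + 1 by omega, pow_succ,
      mul_two, mul_add]
  · have hr : x.val % m + 1 = m := by have := Nat.mod_lt x.val hm; omega
    have h22 : 2 ≡ 2 ^ m + 2 ^ m [MOD p] := by simpa using (h2.add h2).symm
    rw [hr, Nat.mod_self, show m - x.val % m = 1 by omega, pow_one, ← mul_add, hn]
    exact h22.mul_left' m

theorem twoPowOffset_zero_ne_zero {p : ℕ} (hp : 1 < p) (hn : n = m * p) (hm : 0 < m)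
    (h2 : 2 ^ m ≡ 1 [MOD p]) : twoPowOffset m (0 : Fin n) ≠ 0 := by
  intro h
  rw [twoPowOffset, Fin.val_zero, Nat.zero_mod, Nat.sub_zero, Fin.natCast_eq_zero, hn] at h
  have hp2 : 2 ^ m ≡ 0 [MOD p] := Nat.modEq_zero_iff_dvd.mpr (Nat.dvd_of_mul_dvd_mul_left hm h)
  have := Nat.dvd_one.mp ((Nat.modEq_iff_dvd' (Nat.zero_le 1)).mp (hp2.symm.trans h2))
  omega

theorem exists_ne_one_finRotate_mul_mul_inv_eq_sq {p : ℕ} (hp : 1 < p) (hn : n = m * p)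
    (hm : 0 < m) (h2 : 2 ^ m ≡ 1 [MOD p]) :
    ∃ y ≠ 1, finRotate n * y * (finRotate n)⁻¹ = y ^ 2 := by
  refine ⟨Perm.shear (twoPowOffset m) (twoPowOffset_add_twoPowOffset (hn ▸ dvd_mul_right m p)),
    ?_, ?_⟩
  · rw [Ne, Perm.shear_eq_one_iff]
    exact fun h ↦ twoPowOffset_zero_ne_zero hp hn hm h2 (congrFun h 0)
  · rw [finRotate_eq_addRight_one]
    exact Perm.addRight_mul_shear_mul_inv_eq_sq _ _ 1 (twoPowOffset_eq_add_self hn hm h2)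

end FinCast

theorem isConj_finRotate {n : ℕ} (hn : 2 ≤ n) {σ : Perm (Fin n)} (hσ : σ.IsCycle)
    (hs : σ.support = Finset.univ) : IsConj (finRotate n) σ := by
  obtain ⟨k, rfl⟩ := Nat.exists_eq_add_of_le' hn
  exact isCycle_finRotate.isConj hσ (by rw [support_finRotate, hs])

theorem exists_ne_one_conj_eq_sq_of_isConj {G : Type*} [Group G] {a b : G} (hab : IsConj a b)
    (ha : ∃ y ≠ 1, a * y * a⁻¹ = y ^ 2) : ∃ y ≠ 1, b * y * b⁻¹ = y ^ 2 := by
  obtain ⟨c, rfl⟩ := isConj_iff.mp hab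
  obtain ⟨y, hy, hya⟩ := ha
  refine ⟨MulAut.conj c y, by simpa using hy, ?_⟩
  simp only [← MulAut.conj_apply, ← map_inv, ← map_mul, ← map_pow, hya]

theorem stmt_13_general (n p : ℕ) (hn : 3 ≤ n) (hp3 : 3 ≤ p) (hpn : p ∣ n)
    (hdvd : p ∣ 2 ^ (n / p) - 1) (α : Equiv.Perm (Fin n))
    (hcyc : α.IsCycle) (hsupp : α.support = Finset.univ) :
    ∃ y : Equiv.Perm (Fin n), y ≠ 1 ∧ α * y * α⁻¹ = y ^ 2 := by
  have : NeZero n := ⟨by omega⟩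
  have hm : 0 < n / p := Nat.div_pos (Nat.le_of_dvd (by omega) hpn) (by omega)
  have h2 : 2 ^ (n / p) ≡ 1 [MOD p] := ((Nat.modEq_iff_dvd' Nat.one_le_two_pow).mpr hdvd).symm
  exact exists_ne_one_conj_eq_sq_of_isConj (isConj_finRotate (by omega) hcyc hsupp)
    (exists_ne_one_finRotate_mul_mul_inv_eq_sq (by omega) (Nat.div_mul_cancel hpn).symm hm h2)

/-- Theorem (B1). Let `p ≥ 3` be a prime divisor of `n ≥ 3` with `p ∣ 2^{n/p} - 1`.
Then for every single `n`-cycle `α ∈ Sₙ` the equation `α ∘ y ∘ α⁻¹ = y²` has a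
non-trivial solution `y ≠ 1`. -/
theorem stmt_13 (n p : ℕ) (hn : 3 ≤ n) (hp : p.Prime) (hp3 : 3 ≤ p) (hpn : p ∣ n)
    (hdvd : p ∣ 2 ^ (n / p) - 1) (α : Equiv.Perm (Fin n))
    (hcyc : α.IsCycle) (hsupp : α.support = Finset.univ) :
    ∃ y : Equiv.Perm (Fin n), y ≠ 1 ∧ α * y * α⁻¹ = y ^ 2 :=
  stmt_13_general n p hn hp3 hpn hdvd α hcyc hsupp
end

section
/- Let p ≥ 3 be a prime, q ≥ 1 an integer with p ∣ 2^q − 1, and n = pq. On the n-element set P = {1,…,q} × (ℤ/pℤ) define β(i,j) = (i+1, 2j) for 1 ≤ i ≤ q−1 and β(q,j) = (1, 2j+1), and define y(i,j) = (i, j+1) (second coordinates taken modulo p). Then β and y are permutations of P, β consists of exactly one cycle of length n (β is an n-cycle), y ≠ 1, each cycle of y is ((i,1),(i,2),…,(i,p)) so y has exactly q cycles of length p, and β ∘ y ∘ β⁻¹ = y² (equivalently β ∘ y = y² ∘ β). -/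
/-!
Write `β (i, j) = (i + 1, u j + c i)` on `Fin q × R`, where `c` is the indicator of the last
index. Starting from `(0, j)`, the first `q - 1` steps only multiply by `u`, and the `q`-th step
comes back to the first coordinate `0` with second coordinate `u ^ q j + 1`. When `u ^ q = 1`,
the power `β ^ q` therefore acts on the fibre over `0` as `j ↦ j + 1`, which is transitive on
`ZMod p`, so `β` has a single orbit. The relation `β y β⁻¹ = y ^ 2` for the fibrewise translation
`y` is the identity `u (j + 1) = u j + 2` for `u = 2`, and `y` has prime order `p` without fixed
points, so all its cycles have length `p`.
-/

open Equiv Equiv.Perm Finset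

section FiberAdd

variable {R : Type*} [AddGroup R] (q : ℕ)

def fiberAdd (c : R) : Perm (Fin q × R) :=
  prodCongr (Equiv.refl _) (Equiv.addRight c)

@[simp]
lemma fiberAdd_apply (c : R) (x : Fin q × R) : fiberAdd q c x = (x.1, x.2 + c) := rfl

lemma fiberAdd_zero : fiberAdd q (0 : R) = 1 := by
  ext x <;> simp

lemma fiberAdd_pow (c : R) (n : ℕ) : fiberAdd q c ^ n = fiberAdd q (n • c) := by
  induction n with
  | zero => simp [fiberAdd_zero]
  | succ n ih => ext x <;> simp [pow_succ', ih, succ_nsmul, add_assoc]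

lemma fiberAdd_support [Fintype R] [DecidableEq R] {c : R} (hc : c ≠ 0) :
    (fiberAdd q c).support = univ :=
  eq_univ_of_forall fun x => mem_support.2 fun h => hc (by simpa using congrArg Prod.snd h)

end FiberAdd

section SkewShift

variable {R : Type*} [Ring R] (q : ℕ) [NeZero q]

def wrapCarry (i : Fin q) : R := if (i : ℕ) + 1 < q then 0 else 1

def skewShift (u : Rˣ) : Perm (Fin q × R) :=
  prodShear (Equiv.addRight 1) fun i => u.mulLeft.trans (Equiv.addRight (wrapCarry q i))

@[simp]
lemma skewShift_apply (u : Rˣ) (x : Fin q × R) :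
    skewShift q u x = (x.1 + 1, u * x.2 + wrapCarry q x.1) := rfl

lemma skewShift_mul_fiberAdd (u : Rˣ) (c : R) :
    skewShift q u * fiberAdd q c = fiberAdd q (u * c) * skewShift q u := by
  ext x <;> simp [mul_add, add_right_comm]

lemma skewShift_zero_ne [Nontrivial R] (u : Rˣ) : skewShift q u (0, 0) ≠ (0, 0) := by
  intro h
  have hfst : (1 : Fin q) = 0 := by simpa using congrArg Prod.fst h
  have hsnd : (wrapCarry q 0 : R) = 0 := by simpa using congrArg Prod.snd h
  rw [Fin.one_eq_zero_iff] at hfst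
  simp [wrapCarry, hfst] at hsnd

lemma skewShift_pow_apply_zero_of_lt (u : Rˣ) {m : ℕ} (hm : m < q) (j : R) :
    (skewShift q u ^ m) (0, j) = (⟨m, hm⟩, (u : R) ^ m * j) := by
  induction m with
  | zero => simp
  | succ m ih =>
    rw [pow_succ', mul_apply, ih (by omega), skewShift_apply]
    have hcarry : wrapCarry q (⟨m, by omega⟩ : Fin q) = (0 : R) := if_pos hm
    ext
    · exact Fin.val_add_one_of_lt' hm
    · simp [hcarry, pow_succ', mul_assoc]

lemma skewShift_pow_card_apply_zero (u : Rˣ) (j : R) :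
    (skewShift q u ^ q) (0, j) = (0, (u : R) ^ q * j + 1) := by
  have hq : q - 1 < q := Nat.sub_one_lt (NeZero.ne q)
  have hcarry : wrapCarry q (⟨q - 1, hq⟩ : Fin q) = (1 : R) :=
    if_neg (show ¬q - 1 + 1 < q by omega)
  have hwrap : (⟨q - 1, hq⟩ : Fin q) + 1 = 0 := by
    ext
    simp [Fin.val_add, Nat.sub_add_cancel (NeZero.one_le : 1 ≤ q)]
  calc (skewShift q u ^ q) (0, j) = skewShift q u ((skewShift q u ^ (q - 1)) (0, j)) := by
        rw [← mul_apply, ← pow_succ', Nat.sub_add_cancel NeZero.one_le]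
    _ = (0, (u : R) ^ q * j + 1) := by
        rw [skewShift_pow_apply_zero_of_lt q u hq, skewShift_apply, hwrap, hcarry, ← mul_assoc,
          ← pow_succ', Nat.sub_add_cancel NeZero.one_le]

lemma skewShift_pow_card_mul_apply_zero {u : Rˣ} (hu : u ^ q = 1) (k : ℕ) :
    (skewShift q u ^ (q * k)) (0, 0) = (0, (k : R)) := by
  induction k with
  | zero => simp
  | succ k ih =>
    rw [mul_add_one, add_comm (q * k), pow_add, mul_apply, ih, skewShift_pow_card_apply_zero,
      ← Units.val_pow_eq_pow_val, hu, Units.val_one, one_mul, Nat.cast_succ]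

end SkewShift

section ZModSkewShift

variable (q : ℕ) [NeZero q] {p : ℕ} [NeZero p] {u : (ZMod p)ˣ}

lemma skewShift_sameCycle (hu : u ^ q = 1) (x : Fin q × ZMod p) :
    SameCycle (skewShift q u) (0, 0) x := by
  obtain ⟨i, j⟩ := x
  set k : ZMod p := ↑(u ^ (i : ℕ))⁻¹ * j
  have hk : (u : ZMod p) ^ (i : ℕ) * (k.val : ZMod p) = j := by
    rw [ZMod.natCast_zmod_val, ← Units.val_pow_eq_pow_val, Units.mul_inv_cancel_left]
  have hx : (skewShift q u ^ (i : ℕ)) ((skewShift q u ^ (q * k.val)) (0, 0)) = (i, j) := by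
    rw [skewShift_pow_card_mul_apply_zero q hu, skewShift_pow_apply_zero_of_lt q u i.isLt, hk]
  rw [← hx]
  exact sameCycle_pow_right.2 (sameCycle_pow_right.2 (SameCycle.refl _ _))

variable [Nontrivial (ZMod p)]

lemma skewShift_isCycle (hu : u ^ q = 1) : (skewShift q u).IsCycle :=
  ⟨(0, 0), skewShift_zero_ne q u, fun x _ => skewShift_sameCycle q hu x⟩

lemma skewShift_support (hu : u ^ q = 1) : (skewShift q u).support = univ :=
  eq_univ_of_forall fun x =>
    (skewShift_sameCycle q hu x).mem_support_iff.1 (mem_support.2 (skewShift_zero_ne q u))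

end ZModSkewShift

lemma Equiv.Perm.cycleType_eq_replicate_of_pow_prime_eq_one {α : Type*} [Fintype α]
    [DecidableEq α] {σ : Perm α} {p : ℕ} [hp : Fact p.Prime] (hσ : σ ^ p = 1)
    (hsupp : σ.support = univ) : σ.cycleType = Multiset.replicate (Fintype.card α / p) p := by
  have hrep := cycleType_of_pow_prime_eq_one hσ
  have hsum := sum_cycleType σ
  rw [hrep, Multiset.sum_replicate, hsupp, card_univ, smul_eq_mul] at hsum
  rw [hrep, ← hsum, Nat.mul_div_cancel _ hp.out.pos]

theorem stmt_14_general (p q n : ℕ) [NeZero p] [NeZero q] (hp : p.Prime)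
    (hdvd : p ∣ 2 ^ q - 1) (hn : n = p * q) :
    ∃ β y : Equiv.Perm (Fin q × ZMod p),
      (∀ (i : Fin q) (j : ZMod p),
          β (i, j) = if (i : ℕ) + 1 < q then (i + 1, 2 * j) else (i + 1, 2 * j + 1)) ∧
      (∀ (i : Fin q) (j : ZMod p), y (i, j) = (i, j + 1)) ∧
      β.IsCycle ∧ β.support = Finset.univ ∧ β.support.card = n ∧
      y ≠ 1 ∧ y.cycleType = Multiset.replicate q p ∧
      β * y * β⁻¹ = y ^ 2 := by
  have : Fact p.Prime := ⟨hp⟩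
  have h2q : (2 : ZMod p) ^ q = 1 := by
    have h := (ZMod.natCast_eq_zero_iff _ p).2 hdvd
    rwa [Nat.cast_sub Nat.one_le_two_pow, sub_eq_zero, Nat.cast_pow, Nat.cast_ofNat,
      Nat.cast_one] at h
  set u := Units.ofPowEqOne (2 : ZMod p) q h2q (NeZero.ne q)
  have hu : u ^ q = 1 := Units.pow_ofPowEqOne h2q (NeZero.ne q)
  have hcard : Fintype.card (Fin q × ZMod p) = p * q := by simp [mul_comm]
  have hy_supp := fiberAdd_support q (one_ne_zero : (1 : ZMod p) ≠ 0)
  have hy_pow : fiberAdd q (1 : ZMod p) ^ p = 1 := by simp [fiberAdd_pow, fiberAdd_zero]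
  refine ⟨skewShift q u, fiberAdd q 1, fun i j => ?_, fun i j => rfl, skewShift_isCycle q hu,
    skewShift_support q hu, ?_, ?_, ?_, ?_⟩
  · split_ifs with h <;> simp [wrapCarry, h, u]
  · rw [skewShift_support q hu, card_univ, hcard, hn]
  · intro h
    rw [h, support_one] at hy_supp
    exact univ_nonempty.ne_empty hy_supp.symm
  · rw [cycleType_eq_replicate_of_pow_prime_eq_one hy_pow hy_supp, hcard,
      Nat.mul_div_cancel_left _ hp.pos]
  · rw [mul_inv_eq_iff_eq_mul, skewShift_mul_fiberAdd, fiberAdd_pow]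
    simp [u]

/-- The construction in Theorem (B1). Let `p ≥ 3` be a prime, `q ≥ 1`,
`p ∣ 2^q - 1` and `n = pq`. On the set `P = Fin q × ℤ/pℤ` (the first coordinate
written 0-indexed, so `(i,j) ↦ (i+1, 2j)` for `i+1 < q` and `(q-1, j) ↦ (0, 2j+1)`)
there are permutations `β` and `y` given by the indicated formulas such that `β`
is a single `n`-cycle, `y ≠ 1`, `y` has exactly `q` cycles, all of length `p`
(each cycle of `y` being `((i,1),(i,2),…,(i,p))`), and `β ∘ y ∘ β⁻¹ = y²`. -/
theorem stmt_14 (p q n : ℕ) [NeZero p] [NeZero q] (hp : p.Prime) (hp3 : 3 ≤ p) (hq : 1 ≤ q)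
    (hdvd : p ∣ 2 ^ q - 1) (hn : n = p * q) :
    ∃ β y : Equiv.Perm (Fin q × ZMod p),
      (∀ (i : Fin q) (j : ZMod p),
          β (i, j) = if (i : ℕ) + 1 < q then (i + 1, 2 * j) else (i + 1, 2 * j + 1)) ∧
      (∀ (i : Fin q) (j : ZMod p), y (i, j) = (i, j + 1)) ∧
      β.IsCycle ∧ β.support = Finset.univ ∧ β.support.card = n ∧
      y ≠ 1 ∧ y.cycleType = Multiset.replicate q p ∧
      β * y * β⁻¹ = y ^ 2 :=
  stmt_14_general p q n hp hdvd hn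
end

section
/- Let p ≥ 3 be a prime divisor of 2^{2^m} − 1 (m ≥ 0) and let n = p·2^m. Let α ∈ Sₙ be a cyclic permutation of length n (e.g. α = (1,2,…,n)). Then the equation α ∘ y ∘ α⁻¹ = y² has a non-trivial solution, and for any non-trivial solution y ≠ 1 one has y^p = 1 and the set of all solutions is exactly {y, y², …, y^{p−1}, y^p = 1}; in particular the equation has exactly p solutions. -/
/-!
Conjugate `α` to the translation `T : x ↦ x + 1` of `ZMod n`. From `T y T⁻¹ = y²` we get
`Tᵏ y T⁻ᵏ = y ^ 2 ^ k`, so `y ^ 2 ^ n = y` and `y` has odd order. The fixed points of a solution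
are stable under `T⁻¹`, hence every power of `y` is `1` or fixed-point free; so `⟨y⟩` acts freely,
and `orderOf y`, being odd and dividing `n = p * 2 ^ m`, divides `p`. Since `p ∣ 2 ^ 2 ^ m - 1`,
`y` commutes with `T ^ 2 ^ m` and therefore descends to a solution on `ZMod (2 ^ m)`, which is
trivial by the same argument: `y` preserves residues modulo `2 ^ m`. The displacement
`c x = y x - x` then satisfies `c (x - 1) = 2 * c x`, so `y` is determined by
`y 0 ∈ 2 ^ m • ZMod n`. This leaves `p` candidates, namely the powers of an explicit solution
with `y 0 = 2 ^ m`.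
-/

open Equiv Equiv.Perm Function Subgroup

theorem setOf_conj_eq_sq_eq_preimage {G H : Type*} [Group G] [Group H] (Φ : G ≃* H) (a : G) :
    {z | a * z * a⁻¹ = z ^ 2} = Φ ⁻¹' {w | Φ a * w * (Φ a)⁻¹ = w ^ 2} := by
  ext z
  change a * z * a⁻¹ = z ^ 2 ↔ Φ a * Φ z * (Φ a)⁻¹ = Φ z ^ 2
  rw [← map_inv, ← map_mul, ← map_mul, ← map_pow, Φ.injective.eq_iff]

theorem MulEquiv.preimage_zpowers {G H : Type*} [Group G] [Group H] (Φ : G ≃* H) (b : H) :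
    Φ ⁻¹' (zpowers b : Set H) = zpowers (Φ.symm b) := by
  have h := MonoidHom.map_zpowers (Φ.symm : H →* G) b
  rw [← comap_equiv_eq_map_symm] at h
  exact congrArg SetLike.coe h

theorem zpowers_eq_of_mem_of_ne_one {G : Type*} [Group G] [Finite G] {g w : G}
    (hg : (orderOf g).Prime) (hw : w ∈ zpowers g) (hw1 : w ≠ 1) : zpowers w = zpowers g := by
  refine eq_of_le_of_card_ge (zpowers_le.mpr hw) ?_
  rw [Nat.card_zpowers, Nat.card_zpowers]
  rcases (Nat.dvd_prime hg).mp (orderOf_dvd_of_mem_zpowers hw) with h | h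
  · exact absurd (orderOf_eq_one_iff.mp h) hw1
  · exact h.ge

theorem coe_zpowers_eq_setOf_pow_Icc {G : Type*} [Group G] {w : G} {p : ℕ} (hp : 0 < p)
    (hw : w ^ p = 1) : (zpowers w : Set G) = {z | ∃ k, 1 ≤ k ∧ k ≤ p ∧ z = w ^ k} := by
  ext z
  constructor
  · intro hz
    obtain ⟨k, rfl⟩ :=
      ((isOfFinOrder_iff_pow_eq_one.mpr ⟨p, hp, hw⟩).mem_powers_iff_mem_zpowers).mpr hz
    dsimp only
    have hk : w ^ k = w ^ (k % p) := by
      conv_lhs => rw [← Nat.mod_add_div k p, pow_add, pow_mul, hw, one_pow, mul_one]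
    rcases Nat.eq_zero_or_pos (k % p) with h0 | hpos
    · exact ⟨p, hp, le_rfl, by rw [hk, h0, pow_zero, hw]⟩
    · exact ⟨k % p, hpos, (Nat.mod_lt k hp).le, hk⟩
  · rintro ⟨k, -, -, rfl⟩
    exact npow_mem_zpowers w k

section ConjEqSq

variable {G : Type*} [Group G] {a y : G}

theorem conj_pow_eq_sq_pow (hy : a * y * a⁻¹ = y ^ 2) (k : ℕ) :
    a * y ^ k * a⁻¹ = (y ^ k) ^ 2 := by
  rw [← conj_pow, hy, ← pow_mul, ← pow_mul, mul_comm]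

theorem pow_conj_eq_pow_two_pow (hy : a * y * a⁻¹ = y ^ 2) (k : ℕ) :
    a ^ k * y * (a ^ k)⁻¹ = y ^ 2 ^ k := by
  induction k with
  | zero => simp
  | succ k ih =>
    rw [pow_succ', mul_inv_rev, ← mul_assoc, mul_assoc _ _ y, mul_assoc a, ih,
      conj_pow_eq_sq_pow hy, ← pow_mul, pow_succ]

theorem odd_orderOf_of_conj_eq_sq_s15 [Finite G] (hy : a * y * a⁻¹ = y ^ 2) : Odd (orderOf y) := by
  have hfix : y ^ 2 ^ orderOf a = y ^ 1 := by
    rw [← pow_conj_eq_pow_two_pow hy, pow_orderOf_eq_one, one_mul, inv_one, mul_one, pow_one]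
  have hdvd : orderOf y ∣ 2 ^ orderOf a - 1 :=
    (Nat.modEq_iff_dvd' Nat.one_le_two_pow).mp (pow_eq_pow_iff_modEq.mp hfix).symm
  have hodd : Odd (2 ^ orderOf a - 1) :=
    Nat.Even.sub_odd Nat.one_le_two_pow ((Nat.even_pow' (orderOf_pos a).ne').mpr even_two) odd_one
  exact hodd.of_dvd_nat hdvd

end ConjEqSq

namespace Equiv.Perm

variable {β : Type*} {a y : Perm β}

theorem isFixedPt_inv_apply_of_conj_eq_sq (hy : a * y * a⁻¹ = y ^ 2) {x : β}
    (hx : IsFixedPt y x) : IsFixedPt y (a⁻¹ x) := by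
  have h := congrArg (· x) hy
  simp only [Perm.mul_apply, sq, hx.eq] at h
  exact a.injective (h.trans (a.apply_symm_apply x).symm)

theorem eq_one_of_isFixedPt_of_conj_eq_sq [Finite β] (ha : ∀ x z, a.SameCycle x z)
    (hy : a * y * a⁻¹ = y ^ 2) {x : β} (hx : IsFixedPt y x) : y = 1 := by
  ext z
  obtain ⟨i, -, rfl⟩ := (sameCycle_inv.mpr (ha x z)).exists_pow_eq'
  induction i with
  | zero => exact hx
  | succ i ih => rw [pow_succ', Perm.mul_apply]; exact isFixedPt_inv_apply_of_conj_eq_sq hy ih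

-- `zpowers y` acts freely, so Burnside's lemma reads `card β = #orbits * orderOf y`.
theorem orderOf_dvd_card_of_isFixedPt_pow [Fintype β]
    (h : ∀ (k : ℕ) (x : β), IsFixedPt (y ^ k) x → y ^ k = 1) :
    orderOf y ∣ Fintype.card β := by
  classical
  have hfree : ∀ g : zpowers y, g ≠ 1 → Fintype.card (MulAction.fixedBy β g) = 0 := by
    rintro ⟨g, hg⟩ hg1
    obtain ⟨k, rfl⟩ := mem_powers_iff_mem_zpowers.mpr hg
    exact Fintype.card_eq_zero_iff.mpr ⟨fun ⟨x, hx⟩ => hg1 (Subtype.ext (h k x hx))⟩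
  have burnside := MulAction.sum_card_fixedBy_eq_card_orbits_mul_card_group (zpowers y) β
  rw [Finset.sum_eq_single 1 (fun g _ hg => hfree g hg) (by simp), Fintype.card_zpowers]
    at burnside
  simp only [MulAction.fixedBy_one_eq_univ, Fintype.card_setUniv] at burnside
  exact Dvd.intro_left _ burnside.symm

theorem orderOf_dvd_of_card_eq_mul_two_pow [Fintype β] (ha : ∀ x z, a.SameCycle x z)
    (hy : a * y * a⁻¹ = y ^ 2) {q m : ℕ} (hcard : Fintype.card β = q * 2 ^ m) :
    orderOf y ∣ q := by
  have hcard_dvd : orderOf y ∣ q * 2 ^ m := hcard ▸ orderOf_dvd_card_of_isFixedPt_pow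
    fun k _ hx => eq_one_of_isFixedPt_of_conj_eq_sq ha (conj_pow_eq_sq_pow hy k) hx
  have hcop : (orderOf y).Coprime (2 ^ m) :=
    (Nat.coprime_two_right.mpr (odd_orderOf_of_conj_eq_sq_s15 hy)).pow_right m
  exact hcop.dvd_of_dvd_mul_right hcard_dvd

end Equiv.Perm

namespace ZMod

variable {N : ℕ}

theorem sameCycle_addRight_one [NeZero N] (x z : ZMod N) :
    (Equiv.addRight (1 : ZMod N)).SameCycle x z :=
  ⟨((z - x).val : ℤ), by simp⟩

theorem addRight_one_conj_apply (z : Perm (ZMod N)) (x : ZMod N) :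
    (Equiv.addRight (1 : ZMod N) * z * (Equiv.addRight 1)⁻¹ : Perm (ZMod N)) x =
      z (x - 1) + 1 := by
  simp [sub_eq_add_neg]

theorem conj_addRight_one_eq_sq_iff (z : Perm (ZMod N)) :
    Equiv.addRight 1 * z * (Equiv.addRight 1)⁻¹ = z ^ 2 ↔ ∀ x, z (z x) = z (x - 1) + 1 := by
  rw [Perm.ext_iff]
  exact forall_congr' fun x => by rw [addRight_one_conj_apply, sq, Perm.mul_apply, eq_comm]

variable {d : ℕ} (hd : d ∣ N)

theorem exists_eq_mul_of_castHom_eq_zero [NeZero N] {v : ZMod N}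
    (hv : castHom hd (ZMod d) v = 0) : ∃ k : ℕ, v = k * d := by
  rw [castHom_apply, cast_eq_val, natCast_eq_zero_iff] at hv
  obtain ⟨k, hk⟩ := hv
  exact ⟨k, by rw [← natCast_zmod_val v, hk, Nat.cast_mul, mul_comm]⟩

theorem apply_add_of_commute_addRight [NeZero N] {z : Perm (ZMod N)}
    (hc : Commute (Equiv.addRight (d : ZMod N)) z) {v : ZMod N}
    (hv : castHom hd (ZMod d) v = 0) (x : ZMod N) : z (x + v) = z x + v := by
  obtain ⟨k, rfl⟩ := exists_eq_mul_of_castHom_eq_zero hd hv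
  simpa [nsmul_addRight] using (congrArg (· x) (hc.pow_left k).eq).symm

theorem exists_perm_castHom_apply [NeZero N] [NeZero d] {z : Perm (ZMod N)}
    (hc : Commute (Equiv.addRight (d : ZMod N)) z) :
    ∃ σ : Perm (ZMod d), ∀ x, σ (castHom hd (ZMod d) x) = castHom hd (ZMod d) (z x) := by
  set π := castHom hd (ZMod d)
  let f : ZMod d → ZMod d := fun j => π (z (j.val : ZMod N))
  have hf : ∀ x, f (π x) = π (z x) := by
    intro x
    have hv : π (x - ((π x).val : ZMod N)) = 0 := by simp
    have := apply_add_of_commute_addRight hd hc hv ((π x).val : ZMod N)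
    rw [add_sub_cancel] at this
    rw [this, map_add, hv, add_zero]
  have hsurj : Surjective f := fun j => ⟨π (z⁻¹ (j.val : ZMod N)), by simp [hf]⟩
  exact ⟨Equiv.ofBijective f ⟨Finite.injective_iff_surjective.mpr hsurj, hsurj⟩, hf⟩

end ZMod

theorem exists_mulEquiv_apply_eq_addRight_one {n : ℕ} [NeZero n] (hn : 2 ≤ n)
    {α : Perm (Fin n)} (hcyc : α.IsCycle) (hsupp : α.support = Finset.univ) :
    ∃ Φ : Perm (Fin n) ≃* Perm (ZMod n), Φ α = Equiv.addRight 1 := by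
  obtain ⟨g, hg⟩ := isConj_iff.mp <| hcyc.isConj (isCycle_finRotate_of_le hn)
    (by rw [hsupp, support_finRotate_of_le hn])
  refine ⟨(MulAut.conj g).trans (ZMod.finEquiv n).toEquiv.permCongrHom, ?_⟩
  ext x
  simp [hg, Equiv.permCongr_apply, finRotate_apply]

theorem Nat.pow_modEq_pow_of_modEq {g q d a b : ℕ} (hg : g ^ d ≡ 1 [MOD q])
    (hab : a ≡ b [MOD d]) : g ^ a ≡ g ^ b [MOD q] := by
  have hmod : ∀ c, g ^ c ≡ g ^ (c % d) [MOD q] := fun c => by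
    conv_lhs => rw [← Nat.mod_add_div c d, pow_add, pow_mul]
    simpa using (hg.pow (c / d)).mul_left (g ^ (c % d))
  exact (hmod a).trans (hab ▸ hmod b).symm

namespace SquaringEquation

variable {p m : ℕ}

def reduce : ZMod (p * 2 ^ m) →+* ZMod (2 ^ m) := ZMod.castHom (dvd_mul_left _ _) _

theorem reduce_surjective : Surjective (reduce (p := p) (m := m)) :=
  ZMod.castHom_surjective _

theorem reduce_two_pow_mul (c : ZMod (p * 2 ^ m)) : reduce (2 ^ m * c) = 0 := by
  have h : (2 : ZMod (2 ^ m)) ^ m = 0 := by exact_mod_cast ZMod.natCast_self (2 ^ m)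
  rw [map_mul, map_pow, map_ofNat, h, zero_mul]

/- A solution `z` preserving residues modulo `2 ^ m` has displacement `c x = z x - x` with
`c (x - 1) = 2 * c x`; choosing `c 0 = 2 ^ m` gives `c x = 2 ^ m * 2 ^ k` with `k ≡ -x [MOD 2 ^ m]`,
which is consistent because `2 ^ m * 2 ^ 2 ^ m = 2 ^ m` in `ZMod (p * 2 ^ m)`. -/
variable (p m) in
def baseSolution : Perm (ZMod (p * 2 ^ m)) where
  toFun x := x + 2 ^ m * 2 ^ (-reduce x).val
  invFun x := x - 2 ^ m * 2 ^ (-reduce x).val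
  left_inv x := by simp [map_add, reduce_two_pow_mul]
  right_inv x := by simp [map_sub, reduce_two_pow_mul]

theorem baseSolution_apply (x : ZMod (p * 2 ^ m)) :
    baseSolution p m x = x + 2 ^ m * 2 ^ (-reduce x).val := rfl

theorem baseSolution_apply_zero : baseSolution p m 0 = 2 ^ m := by
  simp [baseSolution_apply]

theorem two_pow_mul_two_pow_eq (h2 : 2 ^ 2 ^ m ≡ 1 [MOD p]) {a b : ℕ}
    (hab : a ≡ b [MOD 2 ^ m]) :
    (2 ^ m * 2 ^ a : ZMod (p * 2 ^ m)) = 2 ^ m * 2 ^ b := by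
  have h := (Nat.pow_modEq_pow_of_modEq h2 hab).mul_left' (2 ^ m)
  rw [mul_comm (2 ^ m) p] at h
  exact_mod_cast (ZMod.natCast_eq_natCast_iff _ _ _).mpr h

theorem baseSolution_conj_eq_sq (h2 : 2 ^ 2 ^ m ≡ 1 [MOD p]) :
    Equiv.addRight 1 * baseSolution p m * (Equiv.addRight 1)⁻¹ = baseSolution p m ^ 2 := by
  rw [ZMod.conj_addRight_one_eq_sq_iff]
  intro x
  have hexp : (-reduce (x - 1)).val ≡ (-reduce x).val + 1 [MOD 2 ^ m] := by
    rw [← ZMod.natCast_eq_natCast_iff]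
    push_cast [ZMod.natCast_zmod_val, map_sub, map_one]
    ring
  simp only [baseSolution_apply, map_add, reduce_two_pow_mul, add_zero]
  rw [two_pow_mul_two_pow_eq h2 hexp]
  ring

theorem baseSolution_ne_one (hp : 1 < p) : baseSolution p m ≠ 1 := by
  intro h
  have h0 := baseSolution_apply_zero (p := p) (m := m)
  rw [h, Perm.one_apply] at h0
  have hdvd : p * 2 ^ m ∣ 2 ^ m := (ZMod.natCast_eq_zero_iff _ _).mp (by exact_mod_cast h0.symm)
  have hle := Nat.le_of_dvd (by positivity) hdvd
  nlinarith [Nat.one_le_two_pow (n := m)]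

variable [NeZero p] {z w : Perm (ZMod (p * 2 ^ m))}

theorem pow_eq_one_of_conj_eq_sq (hz : Equiv.addRight 1 * z * (Equiv.addRight 1)⁻¹ = z ^ 2) :
    z ^ p = 1 :=
  orderOf_dvd_iff_pow_eq_one.mp <|
    Perm.orderOf_dvd_of_card_eq_mul_two_pow ZMod.sameCycle_addRight_one hz (ZMod.card _)

theorem commute_addRight_two_pow_of_conj_eq_sq (h2 : 2 ^ 2 ^ m ≡ 1 [MOD p])
    (hz : Equiv.addRight 1 * z * (Equiv.addRight 1)⁻¹ = z ^ 2) :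
    Commute (Equiv.addRight ((2 ^ m : ℕ) : ZMod (p * 2 ^ m))) z := by
  have hfix : z ^ 2 ^ 2 ^ m = z ^ 1 := pow_eq_pow_iff_modEq.mpr <|
    h2.of_dvd (orderOf_dvd_of_pow_eq_one (pow_eq_one_of_conj_eq_sq hz))
  have h := pow_conj_eq_pow_two_pow hz (2 ^ m)
  rw [hfix, pow_one, nsmul_addRight, nsmul_one] at h
  exact mul_inv_eq_iff_eq_mul.mp h

-- `z` descends to a solution on `ZMod (2 ^ m)`, whose order is odd and divides `2 ^ m`.
theorem reduce_apply_of_conj_eq_sq (h2 : 2 ^ 2 ^ m ≡ 1 [MOD p])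
    (hz : Equiv.addRight 1 * z * (Equiv.addRight 1)⁻¹ = z ^ 2) (x : ZMod (p * 2 ^ m)) :
    reduce (z x) = reduce x := by
  obtain ⟨σ, hσ⟩ : ∃ σ : Perm (ZMod (2 ^ m)), ∀ x, σ (reduce x) = reduce (z x) :=
    ZMod.exists_perm_castHom_apply _ (commute_addRight_two_pow_of_conj_eq_sq h2 hz)
  have hσsol : Equiv.addRight 1 * σ * (Equiv.addRight 1)⁻¹ = σ ^ 2 := by
    rw [ZMod.conj_addRight_one_eq_sq_iff] at hz ⊢
    intro j
    obtain ⟨t, rfl⟩ := reduce_surjective (p := p) j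
    rw [hσ, hσ, hz, map_add, map_one, ← map_one reduce, ← map_sub, hσ]
  have hσ1 : σ = 1 := orderOf_eq_one_iff.mp <| Nat.dvd_one.mp <|
    Perm.orderOf_dvd_of_card_eq_mul_two_pow ZMod.sameCycle_addRight_one hσsol
      (by rw [ZMod.card, one_mul])
  rw [← hσ, hσ1, Perm.one_apply]

theorem apply_add_of_conj_eq_sq (h2 : 2 ^ 2 ^ m ≡ 1 [MOD p])
    (hz : Equiv.addRight 1 * z * (Equiv.addRight 1)⁻¹ = z ^ 2) {v : ZMod (p * 2 ^ m)}
    (hv : reduce v = 0) (x : ZMod (p * 2 ^ m)) : z (x + v) = z x + v :=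
  ZMod.apply_add_of_commute_addRight _ (commute_addRight_two_pow_of_conj_eq_sq h2 hz) hv x

theorem apply_sub_one_sub_of_conj_eq_sq (h2 : 2 ^ 2 ^ m ≡ 1 [MOD p])
    (hz : Equiv.addRight 1 * z * (Equiv.addRight 1)⁻¹ = z ^ 2) (x : ZMod (p * 2 ^ m)) :
    z (x - 1) - (x - 1) = 2 * (z x - x) := by
  have hshift : z (z x) = z x + (z x - x) := by
    have hv : reduce (z x - x) = 0 := by rw [map_sub, reduce_apply_of_conj_eq_sq h2 hz, sub_self]
    simpa using apply_add_of_conj_eq_sq h2 hz hv x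
  have heq := (ZMod.conj_addRight_one_eq_sq_iff z).mp hz x
  linear_combination hshift - heq

theorem eq_of_apply_zero_eq_of_conj_eq_sq (h2 : 2 ^ 2 ^ m ≡ 1 [MOD p])
    (hz : Equiv.addRight 1 * z * (Equiv.addRight 1)⁻¹ = z ^ 2)
    (hw : Equiv.addRight 1 * w * (Equiv.addRight 1)⁻¹ = w ^ 2) (h0 : z 0 = w 0) : z = w := by
  have key : ∀ j : ℕ, z (-j) - (-j) = w (-j) - (-j) := by
    intro j
    induction j with
    | zero => simpa using h0
    | succ j ih =>
      rw [Nat.cast_succ, neg_add, ← sub_eq_add_neg, apply_sub_one_sub_of_conj_eq_sq h2 hz,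
        apply_sub_one_sub_of_conj_eq_sq h2 hw, ih]
  ext x
  simpa using key (-x).val

theorem pow_baseSolution_apply_zero (h2 : 2 ^ 2 ^ m ≡ 1 [MOD p]) (u : ℕ) :
    (baseSolution p m ^ u) 0 = u * 2 ^ m := by
  induction u with
  | zero => simp
  | succ u ih =>
    have hv : reduce ((u : ZMod (p * 2 ^ m)) * 2 ^ m) = 0 := by
      rw [mul_comm (u : ZMod (p * 2 ^ m)), reduce_two_pow_mul]
    have h := apply_add_of_conj_eq_sq h2 (baseSolution_conj_eq_sq h2) hv 0
    rw [zero_add, baseSolution_apply_zero] at h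
    rw [pow_succ', Perm.mul_apply, ih, h]
    push_cast
    ring

theorem setOf_conj_eq_sq_eq_zpowers (h2 : 2 ^ 2 ^ m ≡ 1 [MOD p]) :
    {z : Perm (ZMod (p * 2 ^ m)) | Equiv.addRight 1 * z * (Equiv.addRight 1)⁻¹ = z ^ 2} =
      zpowers (baseSolution p m) := by
  have hy := baseSolution_conj_eq_sq h2
  ext z
  constructor
  · intro hz
    have h0 : reduce (z 0) = 0 := by rw [reduce_apply_of_conj_eq_sq h2 hz, map_zero]
    obtain ⟨u, hu⟩ := ZMod.exists_eq_mul_of_castHom_eq_zero _ h0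
    have hzu : z = baseSolution p m ^ u :=
      eq_of_apply_zero_eq_of_conj_eq_sq h2 hz (conj_pow_eq_sq_pow hy u)
        (by rw [hu, pow_baseSolution_apply_zero h2]; push_cast; rfl)
    exact hzu ▸ npow_mem_zpowers _ u
  · intro hz
    obtain ⟨u, rfl⟩ := mem_powers_iff_mem_zpowers.mpr hz
    exact conj_pow_eq_sq_pow hy u

theorem orderOf_baseSolution (hp : p.Prime) (h2 : 2 ^ 2 ^ m ≡ 1 [MOD p]) :
    orderOf (baseSolution p m) = p :=
  haveI := Fact.mk hp
  orderOf_eq_prime (pow_eq_one_of_conj_eq_sq (baseSolution_conj_eq_sq h2))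
    (baseSolution_ne_one hp.one_lt)

end SquaringEquation

open SquaringEquation in
theorem stmt_15_general (m p n : ℕ) (hp : p.Prime)
    (hdvd : p ∣ 2 ^ 2 ^ m - 1) (hn : n = p * 2 ^ m) (α : Equiv.Perm (Fin n))
    (hcyc : α.IsCycle) (hsupp : α.support = Finset.univ) :
    (∃ y : Equiv.Perm (Fin n), y ≠ 1 ∧ α * y * α⁻¹ = y ^ 2) ∧
    (∀ y : Equiv.Perm (Fin n), y ≠ 1 → α * y * α⁻¹ = y ^ 2 →
      y ^ p = 1 ∧
      {z : Equiv.Perm (Fin n) | α * z * α⁻¹ = z ^ 2} =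
        {z : Equiv.Perm (Fin n) | ∃ k : ℕ, 1 ≤ k ∧ k ≤ p ∧ z = y ^ k}) ∧
    Set.ncard {z : Equiv.Perm (Fin n) | α * z * α⁻¹ = z ^ 2} = p := by
  have h2 : 2 ^ 2 ^ m ≡ 1 [MOD p] := ((Nat.modEq_iff_dvd' Nat.one_le_two_pow).mpr hdvd).symm
  have : NeZero p := ⟨hp.ne_zero⟩
  subst hn
  obtain ⟨Φ, hΦ⟩ := exists_mulEquiv_apply_eq_addRight_one
    (le_mul_of_le_of_one_le hp.two_le Nat.one_le_two_pow) hcyc hsupp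
  set y := Φ.symm (baseSolution p m)
  have hy : orderOf y = p := by rw [MulEquiv.orderOf_eq, orderOf_baseSolution hp h2]
  have hS : {z | α * z * α⁻¹ = z ^ 2} = (zpowers y : Set _) := by
    rw [setOf_conj_eq_sq_eq_preimage Φ, hΦ, setOf_conj_eq_sq_eq_zpowers h2,
      MulEquiv.preimage_zpowers]
  have hmem : ∀ z, α * z * α⁻¹ = z ^ 2 ↔ z ∈ zpowers y := fun z => Set.ext_iff.mp hS z
  have hy1 : y ≠ 1 := fun h => hp.one_lt.ne' (by rw [← hy, h, orderOf_one])
  refine ⟨⟨y, hy1, (hmem y).mpr (mem_zpowers y)⟩, fun w hw1 hw => ?_, ?_⟩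
  · have hzw := zpowers_eq_of_mem_of_ne_one (by rwa [hy]) ((hmem w).mp hw) hw1
    have hwp : orderOf w = p := by rw [← Nat.card_zpowers, hzw, Nat.card_zpowers, hy]
    have hwp1 : w ^ p = 1 := orderOf_dvd_iff_pow_eq_one.mp (dvd_of_eq hwp)
    exact ⟨hwp1, by rw [hS, ← hzw, coe_zpowers_eq_setOf_pow_Icc hp.pos hwp1]⟩
  · rw [hS, ← Nat.card_coe_set_eq, SetLike.coe_sort_coe, Nat.card_zpowers, hy]

/-- Theorem (B2). Let `p ≥ 3` be a prime divisor of `2^{2^m} - 1` and `n = p·2^m`,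
and let `α ∈ Sₙ` be a single `n`-cycle. Then `α ∘ y ∘ α⁻¹ = y²` has a non-trivial
solution; for any non-trivial solution `y ≠ 1` one has `y^p = 1` and the set of
all solutions is exactly `{y, y², …, y^{p-1}, y^p = 1}`; in particular the
equation has exactly `p` solutions. -/
theorem stmt_15 (m p n : ℕ) (hp : p.Prime) (hp3 : 3 ≤ p)
    (hdvd : p ∣ 2 ^ 2 ^ m - 1) (hn : n = p * 2 ^ m) (α : Equiv.Perm (Fin n))
    (hcyc : α.IsCycle) (hsupp : α.support = Finset.univ) :
    (∃ y : Equiv.Perm (Fin n), y ≠ 1 ∧ α * y * α⁻¹ = y ^ 2) ∧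
    (∀ y : Equiv.Perm (Fin n), y ≠ 1 → α * y * α⁻¹ = y ^ 2 →
      y ^ p = 1 ∧
      {z : Equiv.Perm (Fin n) | α * z * α⁻¹ = z ^ 2} =
        {z : Equiv.Perm (Fin n) | ∃ k : ℕ, 1 ≤ k ∧ k ≤ p ∧ z = y ^ k}) ∧
    Set.ncard {z : Equiv.Perm (Fin n) | α * z * α⁻¹ = z ^ 2} = p :=
  stmt_15_general m p n hp hdvd hn α hcyc hsupp
end
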